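/- arXiv:0806.4730 — 6 statements merged into one kernel-verified Lean document; each statement's English description precedes it below -/
import Mathlib

section
/- Let f : [0,1] → ℝ be a measurable bounded function and f* its increasing rearrangement. Then f and f* are equimeasurable: for every y ∈ ℝ, Leb{x ∈ [0,1] : f(x) ≤ y} = Leb{x ∈ [0,1] : f*(x) ≤ y}. -/
/-!
The rearrangement `f*` is the generalized inverse (quantile function) of the distribution
function `F y = Leb{u ∈ [0,1] : f u ≤ y}`, i.e. of the cdf of the law of `f` under Lebesgue
measure on `[0,1]`. Since `F` is monotone and right-continuous with limits `0` and `1`, for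
`0 < x < 1` we have the Galois connection `f* x ≤ y ↔ x ≤ F y`. Hence `{f* ≤ y}` agrees with
`[0, F y]` up to the endpoints, and its measure is `F y`.
-/

open MeasureTheory

/-- Increasing rearrangement of a function on [0,1]. -/
noncomputable def rearr (f : ℝ → ℝ) (x : ℝ) : ℝ :=
  sInf {y : ℝ | x ≤ (volume (Set.Icc (0:ℝ) 1 ∩ {u : ℝ | f u ≤ y})).toReal}

open ProbabilityTheory Set Filter Topology

theorem StieltjesFunction.csInf_setOf_le_apply_le_iff (F : StieltjesFunction ℝ) {x y : ℝ}
    (hne : ∃ z, x ≤ F z) (hlow : ∃ z, F z < x) :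
    sInf {z | x ≤ F z} ≤ y ↔ x ≤ F y := by
  obtain ⟨z₀, hz₀⟩ := hlow
  have hbdd : BddBelow {z | x ≤ F z} :=
    ⟨z₀, fun z hz => le_of_lt (F.mono.reflect_lt (hz₀.trans_le hz))⟩
  refine ⟨fun h => ?_, fun h => csInf_le hbdd h⟩
  set q := sInf {z | x ≤ F z}
  have hq : x ≤ F q := by
    have hright : Tendsto F (𝓝[>] q) (𝓝 (F q)) :=
      (F.right_continuous q).mono_left (nhdsWithin_mono _ Ioi_subset_Ici_self)
    refine ge_of_tendsto hright (eventually_nhdsWithin_of_forall fun z hz => ?_)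
    obtain ⟨w, hw, hwz⟩ := exists_lt_of_csInf_lt hne hz
    exact le_trans hw (F.mono hwz.le)
  exact hq.trans (F.mono h)

theorem ProbabilityTheory.csInf_setOf_le_cdf_le_iff (ν : Measure ℝ) {x y : ℝ}
    (hx : x ∈ Ioo 0 1) :
    sInf {z | x ≤ cdf ν z} ≤ y ↔ x ≤ cdf ν y :=
  (cdf ν).csInf_setOf_le_apply_le_iff
    (((tendsto_cdf_atTop ν).eventually (eventually_ge_nhds hx.2)).exists)
    (((tendsto_cdf_atBot ν).eventually (eventually_lt_nhds hx.1)).exists)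

theorem MeasureTheory.measure_Icc_inter_congr_of_forall_Ioo {μ : Measure ℝ}
    [NullSingletonClass μ] {a b : ℝ} {s t : Set ℝ} (h : ∀ x ∈ Ioo a b, x ∈ s ↔ x ∈ t) :
    μ (Icc a b ∩ s) = μ (Icc a b ∩ t) := by
  have hIoo : Ioo a b ∩ s = Ioo a b ∩ t := by
    ext x
    exact and_congr_right (h x)
  calc μ (Icc a b ∩ s) = μ (Ioo a b ∩ s) :=
        measure_congr (Ioo_ae_eq_Icc.symm.inter (EventuallyEq.refl _ _))
    _ = μ (Ioo a b ∩ t) := by rw [hIoo]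
    _ = μ (Icc a b ∩ t) := measure_congr (Ioo_ae_eq_Icc.inter (EventuallyEq.refl _ _))

instance : IsProbabilityMeasure (volume.restrict (Icc (0:ℝ) 1)) :=
  ⟨by simp⟩

theorem rearr_eq_csInf_cdf {f : ℝ → ℝ} (hf : Measurable f) (x : ℝ) :
    rearr f x = sInf {y | x ≤ cdf ((volume.restrict (Icc 0 1)).map f) y} := by
  have : IsProbabilityMeasure ((volume.restrict (Icc (0:ℝ) 1)).map f) :=
    Measure.isProbabilityMeasure_map hf.aemeasurable
  simp only [rearr, cdf_eq_real, measureReal_def, Measure.map_apply hf measurableSet_Iic,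
    Measure.restrict_apply' measurableSet_Icc, inter_comm]
  rfl

theorem rearr_equimeasurable_general (f : ℝ → ℝ) (hf : Measurable f) :
    ∀ y : ℝ,
      volume (Set.Icc (0:ℝ) 1 ∩ {x : ℝ | f x ≤ y}) =
        volume (Set.Icc (0:ℝ) 1 ∩ {x : ℝ | rearr f x ≤ y}) := by
  intro y
  set ν := (volume.restrict (Icc (0:ℝ) 1)).map f
  have : IsProbabilityMeasure ν := Measure.isProbabilityMeasure_map hf.aemeasurable
  have hIcc : Icc 0 1 ∩ Iic (cdf ν y) = Icc 0 (cdf ν y) := by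
    ext x
    exact ⟨fun h => ⟨h.1.1, h.2⟩, fun h => ⟨⟨h.1, h.2.trans (cdf_le_one ν y)⟩, h.2⟩⟩
  calc volume (Icc 0 1 ∩ {x | f x ≤ y}) = ν (Iic y) := by
        rw [Measure.map_apply hf measurableSet_Iic, Measure.restrict_apply' measurableSet_Icc,
          inter_comm]
        rfl
    _ = volume (Icc 0 1 ∩ Iic (cdf ν y)) := by
        rw [hIcc, Real.volume_Icc, sub_zero, ofReal_cdf]
    _ = volume (Icc 0 1 ∩ {x | rearr f x ≤ y}) :=
        measure_Icc_inter_congr_of_forall_Ioo fun x hx => by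
          rw [mem_Iic, mem_ofPred_eq, rearr_eq_csInf_cdf hf, csInf_setOf_le_cdf_le_iff ν hx]

/-- `f` and its increasing rearrangement `f*` are equimeasurable. -/
theorem rearr_equimeasurable (f : ℝ → ℝ) (hf : Measurable f)
    (hbd : ∃ M : ℝ, ∀ x ∈ Set.Icc (0:ℝ) 1, |f x| ≤ M) :
    ∀ y : ℝ,
      volume (Set.Icc (0:ℝ) 1 ∩ {x : ℝ | f x ≤ y}) =
        volume (Set.Icc (0:ℝ) 1 ∩ {x : ℝ | rearr f x ≤ y}) :=
  rearr_equimeasurable_general f hf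
end

section
/- For every p ∈ [1,∞), the function L(v,t) = |v - t|^p on ℝ² is submodular: for all (v,t), (v',t'), |min(v,v') - min(t,t')|^p + |max(v,v') - max(t,t')|^p ≤ |v-t|^p + |v'-t'|^p. -/
/-!
`|·| ^ p` is convex for `p ≥ 1`, and for any convex `f` the map `(v, t) ↦ f (v - t)` is
submodular. Indeed, when `v ≤ v'` and `t' ≤ t`, the arguments `v - t'` and `v' - t` of the
left-hand side have the same sum as the arguments `v - t` and `v' - t'` of the right-hand side
and lie between them, so convexity compares the two sums; in the other order cases the two sides
coincide.
-/

open Set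

def IsSubmodular {α β : Type*} [Lattice α] [Add β] [LE β] (L : α → β) : Prop :=
  ∀ x y, L (x ⊓ y) + L (x ⊔ y) ≤ L x + L y

theorem convexOn_abs_rpow {p : ℝ} (hp : 1 ≤ p) : ConvexOn ℝ univ fun x : ℝ => |x| ^ p := by
  have himage : (fun x : ℝ => |x|) '' univ = Ici 0 := by
    ext y
    exact ⟨by rintro ⟨x, -, rfl⟩; exact abs_nonneg x, fun hy => ⟨y, mem_univ y, abs_of_nonneg hy⟩⟩
  refine ConvexOn.comp (g := fun x : ℝ => x ^ p) ?_ convexOn_univ_norm ?_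
  · exact himage ▸ convexOn_rpow hp
  · exact himage ▸ fun a ha b _ hab => Real.rpow_le_rpow ha hab (by linarith)

theorem ConvexOn.map_add_map_le_of_mem_Icc {𝕜 β : Type*} [Field 𝕜] [LinearOrder 𝕜]
    [IsStrictOrderedRing 𝕜] [AddCommGroup β] [PartialOrder β] [IsOrderedAddMonoid β]
    [Module 𝕜 β] {s : Set 𝕜} {f : 𝕜 → β} (hf : ConvexOn 𝕜 s f) {a b x y : 𝕜}
    (ha : a ∈ s) (hb : b ∈ s) (hx : x ∈ Icc a b) (hxy : x + y = a + b) :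
    f x + f y ≤ f a + f b := by
  obtain ⟨hax, hxb⟩ := hx
  rcases (hax.trans hxb).eq_or_lt with rfl | hab
  · obtain rfl : x = a := le_antisymm hxb hax
    obtain rfl : y = x := by linarith
    rfl
  have hba : 0 < b - a := sub_pos.2 hab
  set μ := (x - a) / (b - a)
  have hμ : 0 ≤ μ := div_nonneg (sub_nonneg.2 hax) hba.le
  have hμ' : 0 ≤ 1 - μ := by
    rw [sub_nonneg, div_le_one hba]; linarith
  have hx : (1 - μ) • a + μ • b = x := by
    simp only [smul_eq_mul, μ]; field_simp; ring
  have hy : μ • a + (1 - μ) • b = y := by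
    simp only [smul_eq_mul] at hx ⊢; linear_combination -hxy - hx
  calc f x + f y = f ((1 - μ) • a + μ • b) + f (μ • a + (1 - μ) • b) := by rw [hx, hy]
    _ ≤ ((1 - μ) • f a + μ • f b) + (μ • f a + (1 - μ) • f b) :=
      add_le_add (hf.2 ha hb hμ' hμ (sub_add_cancel 1 μ)) (hf.2 ha hb hμ hμ' (add_sub_cancel μ 1))
    _ = f a + f b := by module

theorem ConvexOn.isSubmodular_comp_sub {f : ℝ → ℝ} (hf : ConvexOn ℝ univ f) :
    IsSubmodular fun z : ℝ × ℝ => f (z.1 - z.2) := by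
  rintro ⟨v, t⟩ ⟨v', t'⟩
  simp only [Prod.inf_def, Prod.sup_def]
  wlog hv : v ≤ v' generalizing v t v' t'
  · simpa only [inf_comm, sup_comm, add_comm] using this v' t' v t (le_of_not_ge hv)
  rcases le_total t t' with ht | ht
  · simp [hv, ht]
  · simp only [inf_of_le_left hv, sup_of_le_right hv, inf_of_le_right ht, sup_of_le_left ht]
    exact hf.map_add_map_le_of_mem_Icc (mem_univ _) (mem_univ _) ⟨by linarith, by linarith⟩
      (by ring)

/-- For every `p ∈ [1, ∞)`, the function `L(v,t) = |v - t|^p` is submodular. -/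
theorem abs_rpow_submodular (p : ℝ) (hp : 1 ≤ p) :
    ∀ v t v' t' : ℝ,
      |min v v' - min t t'| ^ p + |max v v' - max t t'| ^ p ≤
        |v - t| ^ p + |v' - t'| ^ p :=
  fun v t v' t' => (convexOn_abs_rpow hp).isSubmodular_comp_sub (v, t) (v', t')
end

section
/- For p ∈ (1,∞) and ε > 0, let K ⊂ ℝ be a compact set. Then η_p := inf { |v - t'|^p + |v' - t|^p - |v - t|^p - |v' - t'|^p : v, v', t, t' ∈ K, v' ≥ v + ε, t' ≥ t + ε } is strictly positive. -/
/-!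
The gain is continuous on the compact set of pairs of `ε`-separated pairs in `K`, so its infimum
is attained. At every such configuration it is positive: `(v - t) + (v' - t') = (v - t') + (v' - t)`
and `v - t'` is strictly the smallest of the four differences, so strict convexity of `x ↦ |x| ^ p`
makes the concordant pair of terms strictly smaller than the discordant one.
-/

open Set

/-- On `x = -y` the triangle inequality `|a x + b y| ≤ a |x| + b |y|` is strict, and elsewhere
`|x| ≠ |y|` makes the convexity of `r ↦ r ^ p` on `[0, ∞)` strict. -/
theorem strictConvexOn_abs_rpow {p : ℝ} (hp : 1 < p) :
    StrictConvexOn ℝ univ fun x : ℝ ↦ |x| ^ p := by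
  refine ⟨convex_univ, fun x _ y _ hxy a b ha hb hab ↦ ?_⟩
  simp only [smul_eq_mul]
  have habs : |a * x + b * y| ≤ a * |x| + b * |y| := by
    simpa [abs_mul, abs_of_pos ha, abs_of_pos hb] using abs_add_le (a * x) (b * y)
  rcases eq_or_ne |x| |y| with hxy' | hxy'
  · obtain rfl : x = -y := (abs_eq_abs.mp hxy').resolve_left hxy
    have hy : 0 < |y| := abs_pos.mpr fun h ↦ hxy (by simp [h])
    have htri : |a * -y + b * y| < a * |-y| + b * |y| := by
      rw [show a * -y + b * y = (b - a) * y by ring, abs_mul, abs_neg, ← add_mul]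
      exact mul_lt_mul_of_pos_right (abs_sub_lt_iff.mpr ⟨by linarith, by linarith⟩) hy
    calc |a * -y + b * y| ^ p < (a * |-y| + b * |y|) ^ p :=
          Real.rpow_lt_rpow (abs_nonneg _) htri (by linarith)
      _ ≤ a * |-y| ^ p + b * |y| ^ p :=
          (convexOn_rpow hp.le).2 (abs_nonneg (-y)) (abs_nonneg y) ha.le hb.le hab
  · calc |a * x + b * y| ^ p ≤ (a * |x| + b * |y|) ^ p :=
          Real.rpow_le_rpow (abs_nonneg _) habs (by linarith)
      _ < a * |x| ^ p + b * |y| ^ p :=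
          (strictConvexOn_rpow hp).2 (abs_nonneg x) (abs_nonneg y) hxy' ha hb hab

section StrictConvexOn

variable {𝕜 : Type*} [Field 𝕜] [LinearOrder 𝕜] [IsStrictOrderedRing 𝕜] {s : Set 𝕜} {f : 𝕜 → 𝕜}

/-- `b` and `c` are the two convex combinations of `a` and `d` with swapped weights. -/
theorem StrictConvexOn.map_add_map_lt_of_add_eq (hf : StrictConvexOn 𝕜 s f) {a b c d : 𝕜}
    (ha : a ∈ s) (hd : d ∈ s) (hab : a < b) (hac : a < c) (hsum : a + d = b + c) :
    f b + f c < f a + f d := by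
  have hda : 0 < d - a := by linarith
  set w := (d - b) / (d - a)
  have hw₀ : 0 < w := div_pos (by linarith) hda
  have hw₁ : w < 1 := (div_lt_one hda).mpr (by linarith)
  have hb : w • a + (1 - w) • d = b := by
    simp only [w, smul_eq_mul]; field_simp; ring
  have hc : (1 - w) • a + w • d = c := by
    simp only [w, smul_eq_mul]; field_simp; linear_combination (d - a) * hsum
  have hfb := hf.2 ha hd (by linarith : a ≠ d) hw₀ (sub_pos.mpr hw₁) (by ring)
  have hfc := hf.2 ha hd (by linarith : a ≠ d) (sub_pos.mpr hw₁) hw₀ (by ring)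
  rw [hb] at hfb
  rw [hc] at hfc
  simp only [smul_eq_mul] at hfb hfc
  linarith

end StrictConvexOn

theorem abs_sub_rpow_add_abs_sub_rpow_lt {p : ℝ} (hp : 1 < p) {v v' t t' : ℝ}
    (hv : v < v') (ht : t < t') :
    |v - t| ^ p + |v' - t'| ^ p < |v - t'| ^ p + |v' - t| ^ p :=
  (strictConvexOn_abs_rpow hp).map_add_map_lt_of_add_eq (mem_univ _) (mem_univ _)
    (by linarith) (by linarith) (by ring)

theorem IsCompact.sInf_image_pos {α : Type*} [TopologicalSpace α] {S : Set α} {g : α → ℝ}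
    (hS : IsCompact S) (hne : S.Nonempty) (hg : ContinuousOn g S) (hpos : ∀ x ∈ S, 0 < g x) :
    0 < sInf (g '' S) := by
  obtain ⟨x, hx, hgx⟩ := (hS.image_of_continuousOn hg).sInf_mem (hne.image g)
  exact hgx ▸ hpos x hx

theorem IsCompact.sep_add_le {K : Set ℝ} (hK : IsCompact K) (ε : ℝ) :
    IsCompact {q ∈ K ×ˢ K | q.1 + ε ≤ q.2} :=
  (hK.prod hK).inter_right (isClosed_le (continuous_fst.add continuous_const) continuous_snd)

/-- Strict submodularity modulus of `|v - t|^p` over a compact set: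
the infimal gain from sorting an `ε`-discordant pair is strictly positive. -/
theorem eta_p_pos (p : ℝ) (hp1 : 1 < p) (ε : ℝ) (hε : 0 < ε)
    (K : Set ℝ) (hK : IsCompact K)
    (hne : ∃ v v' : ℝ, v ∈ K ∧ v' ∈ K ∧ v + ε ≤ v') :
    0 < sInf {r : ℝ | ∃ v v' t t' : ℝ, v ∈ K ∧ v' ∈ K ∧ t ∈ K ∧ t' ∈ K ∧
      v + ε ≤ v' ∧ t + ε ≤ t' ∧
      r = |v - t'| ^ p + |v' - t| ^ p - |v - t| ^ p - |v' - t'| ^ p} := by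
  obtain ⟨v₀, v₀', hv₀, hv₀', hv₀v₀'⟩ := hne
  set P := {q ∈ K ×ˢ K | q.1 + ε ≤ q.2}
  set gain : (ℝ × ℝ) × (ℝ × ℝ) → ℝ := fun ((v, v'), (t, t')) ↦
    |v - t'| ^ p + |v' - t| ^ p - |v - t| ^ p - |v' - t'| ^ p
  have hP₀ : (v₀, v₀') ∈ P := ⟨⟨hv₀, hv₀'⟩, hv₀v₀'⟩
  have hcont : Continuous gain := by
    simp only [gain]
    fun_prop (disch := linarith)
  have hgain_pos : ∀ q ∈ P ×ˢ P, 0 < gain q := by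
    rintro ⟨⟨v, v'⟩, ⟨t, t'⟩⟩ ⟨⟨-, hvv'⟩, ⟨-, htt'⟩⟩
    have := abs_sub_rpow_add_abs_sub_rpow_lt hp1 (v := v) (v' := v') (t := t) (t' := t')
      (by linarith) (by linarith)
    simp only [gain]
    linarith
  convert ((hK.sep_add_le ε).prod (hK.sep_add_le ε)).sInf_image_pos
    ⟨((v₀, v₀'), (v₀, v₀')), hP₀, hP₀⟩ hcont.continuousOn hgain_pos using 2
  ext r
  constructor
  · rintro ⟨v, v', t, t', hv, hv', ht, ht', hvv', htt', rfl⟩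
    exact ⟨((v, v'), (t, t')), ⟨⟨⟨hv, hv'⟩, hvv'⟩, ⟨⟨ht, ht'⟩, htt'⟩⟩, rfl⟩
  · rintro ⟨⟨⟨v, v'⟩, ⟨t, t'⟩⟩, ⟨⟨⟨hv, hv'⟩, hvv'⟩, ⟨⟨ht, ht'⟩, htt'⟩⟩, rfl⟩
    exact ⟨v, v', t, t', hv, hv', ht, ht', hvv', htt', rfl⟩
end

section
/- Let f₀ : [0,1] → K be weakly increasing and measurable, and let f̂ : [0,1] → K be any measurable function, with K ⊂ ℝ bounded. Let f̂* be the increasing rearrangement of f̂. Then for every p ∈ [1,∞), (∫₀¹ |f̂*(x) - f₀(x)|^p dx)^{1/p} ≤ (∫₀¹ |f̂(x) - f₀(x)|^p dx)^{1/p}. -/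
open MeasureTheory

/-!
Write `|v - w| ^ p = ∫ r, [r < v] φ (r - w) + [v ≤ r] φ (w - r)`, where `φ` is the derivative
of `d ↦ (max d 0) ^ p`. After Fubini, the error of `g` at level `r` is the integral of the
weight `x ↦ φ (r - f₀ x)` over `{r < g}` plus that of `x ↦ φ (f₀ x - r)` over `{g ≤ r}`.
Since `f₀` is monotone and `p ≥ 1`, the first weight is antitone and the second monotone on
`(0, 1]`. The rearrangement replaces `{r < f}` by a final segment of `(0, 1]` of the same
measure and `{f ≤ r}` by an initial one. By the layer-cake formula, among sets of a given
measure an antitone weight has the smallest integral over the final segment, and a monotone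
weight over the initial one.
-/

open Set Filter Topology ProbabilityTheory

theorem StieltjesFunction.csInf_le_iff {F : StieltjesFunction ℝ} {x c : ℝ}
    (hne : {y | x ≤ F y}.Nonempty) (hbdd : BddBelow {y | x ≤ F y}) :
    sInf {y | x ≤ F y} ≤ c ↔ x ≤ F c := by
  refine ⟨fun h ↦ ?_, fun h ↦ csInf_le hbdd h⟩
  have hev : ∀ᶠ y in 𝓝[>] c, x ≤ F y := eventually_nhdsWithin_of_forall fun y hy ↦ by
    obtain ⟨z, hz, hzy⟩ := exists_lt_of_csInf_lt hne (h.trans_lt hy)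
    exact hz.trans (F.mono hzy.le)
  exact ge_of_tendsto ((F.right_continuous c).mono Ioi_subset_Ici_self) hev

theorem add_sub_one_le_measure_inter {α : Type*} [MeasurableSpace α] {μ : Measure α}
    [IsProbabilityMeasure μ] (s : Set α) {t : Set α} (ht : MeasurableSet t) :
    μ s + μ t - 1 ≤ μ (s ∩ t) := by
  rw [tsub_le_iff_right, ← measure_union_add_inter s ht, add_comm (μ (s ∪ t))]
  gcongr
  exact prob_le_one

theorem lintegral_ofReal_le_of_measure_lt_le {α : Type*} [MeasurableSpace α] {μ ν : Measure α}
    {h : α → ℝ} (h0 : 0 ≤ h) (hh : Measurable h)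
    (hμν : ∀ t, μ {a | t < h a} ≤ ν {a | t < h a}) :
    ∫⁻ a, ENNReal.ofReal (h a) ∂μ ≤ ∫⁻ a, ENNReal.ofReal (h a) ∂ν := by
  rw [lintegral_eq_lintegral_meas_lt μ (.of_forall h0) hh.aemeasurable,
    lintegral_eq_lintegral_meas_lt ν (.of_forall h0) hh.aemeasurable]
  exact lintegral_mono fun t ↦ hμν t

theorem integral_le_integral_of_lintegral_ofReal_le {α : Type*} [MeasurableSpace α]
    {μ : Measure α} {f g : α → ℝ} (hf0 : 0 ≤ f) (hg0 : 0 ≤ g)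
    (hf : AEStronglyMeasurable f μ) (hg : Integrable g μ)
    (h : ∫⁻ a, ENNReal.ofReal (f a) ∂μ ≤ ∫⁻ a, ENNReal.ofReal (g a) ∂μ) :
    ∫ a, f a ∂μ ≤ ∫ a, g a ∂μ := by
  rw [integral_eq_lintegral_of_nonneg_ae (.of_forall hf0) hf,
    integral_eq_lintegral_of_nonneg_ae (.of_forall hg0) hg.aestronglyMeasurable]
  exact ENNReal.toReal_mono hg.lintegral_lt_top.ne h

noncomputable def posRpowDeriv (p d : ℝ) : ℝ := if 0 < d then p * d ^ (p - 1) else 0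

section Kernel

variable {p : ℝ}

theorem posRpowDeriv_nonneg (hp : 0 ≤ p) (d : ℝ) : 0 ≤ posRpowDeriv p d := by
  unfold posRpowDeriv
  split_ifs with hd
  exacts [mul_nonneg hp (Real.rpow_nonneg hd.le _), le_rfl]

theorem monotone_posRpowDeriv (hp : 1 ≤ p) : Monotone (posRpowDeriv p) := by
  intro d e hde
  unfold posRpowDeriv
  split_ifs with hd he he
  · gcongr
  · exact absurd (hd.trans_le hde) he
  · exact mul_nonneg (by linarith) (Real.rpow_nonneg he.le _)
  · exact le_rfl

theorem measurable_posRpowDeriv : Measurable (posRpowDeriv p) :=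
  Measurable.ite measurableSet_Ioi (measurable_const.mul (measurable_id.pow_const _))
    measurable_const

theorem integral_mul_rpow_sub_one (hp : 0 < p) (a : ℝ) :
    ∫ s in (0:ℝ)..a, p * s ^ (p - 1) = a ^ p := by
  rw [intervalIntegral.integral_const_mul, integral_rpow (Or.inl (by linarith)), sub_add_cancel,
    Real.zero_rpow hp.ne', sub_zero]
  field_simp

theorem lintegral_Ioc_rpow_sub_left (hp : 0 < p) {a b : ℝ} (hab : a ≤ b) :
    ∫⁻ r in Ioc a b, ENNReal.ofReal (p * (r - a) ^ (p - 1)) = ENNReal.ofReal ((b - a) ^ p) := by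
  have hint : IntervalIntegrable (fun r ↦ p * (r - a) ^ (p - 1)) volume a b := by
    have := (intervalIntegral.intervalIntegrable_rpow' (a := 0) (b := b - a)
      (r := p - 1) (by linarith)).comp_sub_right a enorm_ne_top
    rw [zero_add, sub_add_cancel] at this
    exact this.const_mul p
  have hnonneg : 0 ≤ᵐ[volume.restrict (Ioc a b)] fun r ↦ p * (r - a) ^ (p - 1) :=
    (ae_restrict_iff' measurableSet_Ioc).mpr (.of_forall fun r hr ↦
      mul_nonneg hp.le (Real.rpow_nonneg (sub_nonneg.mpr hr.1.le) _))
  rw [← ofReal_integral_eq_lintegral_ofReal hint.1 hnonneg,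
    ← intervalIntegral.integral_of_le hab,
    intervalIntegral.integral_comp_sub_right (fun s ↦ p * s ^ (p - 1)), sub_self,
    integral_mul_rpow_sub_one hp]

theorem lintegral_Ioc_rpow_sub_right (hp : 0 < p) {a b : ℝ} (hab : a ≤ b) :
    ∫⁻ r in Ioc a b, ENNReal.ofReal (p * (b - r) ^ (p - 1)) = ENNReal.ofReal ((b - a) ^ p) := by
  have hint : IntervalIntegrable (fun r ↦ p * (b - r) ^ (p - 1)) volume a b := by
    have := (intervalIntegral.intervalIntegrable_rpow' (a := b - a) (b := 0)
      (r := p - 1) (by linarith)).comp_sub_left b enorm_ne_top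
    rw [sub_sub_cancel, sub_zero] at this
    exact this.const_mul p
  have hnonneg : 0 ≤ᵐ[volume.restrict (Ioc a b)] fun r ↦ p * (b - r) ^ (p - 1) :=
    (ae_restrict_iff' measurableSet_Ioc).mpr (.of_forall fun r hr ↦
      mul_nonneg hp.le (Real.rpow_nonneg (sub_nonneg.mpr hr.2) _))
  rw [← ofReal_integral_eq_lintegral_ofReal hint.1 hnonneg,
    ← intervalIntegral.integral_of_le hab,
    intervalIntegral.integral_comp_sub_left (fun s ↦ p * s ^ (p - 1)), sub_self,
    integral_mul_rpow_sub_one hp]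

theorem ofReal_abs_sub_rpow_eq_lintegral (hp : 0 < p) (v w : ℝ) :
    ENNReal.ofReal (|v - w| ^ p) = ∫⁻ r, ENNReal.ofReal
      (if r < v then posRpowDeriv p (r - w) else posRpowDeriv p (w - r)) := by
  rcases le_or_gt w v with hwv | hvw
  · have hK : ∀ r, ENNReal.ofReal
        (if r < v then posRpowDeriv p (r - w) else posRpowDeriv p (w - r)) =
        (Ioo w v).indicator (fun r ↦ ENNReal.ofReal (p * (r - w) ^ (p - 1))) r := by
      intro r
      by_cases hr : r ∈ Ioo w v
      · rw [indicator_of_mem hr, if_pos hr.2, posRpowDeriv, if_pos (sub_pos.mpr hr.1)]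
      · rw [indicator_of_notMem hr, ENNReal.ofReal_eq_zero]
        split_ifs with hrv
        · exact (if_neg (by simpa [hrv] using hr)).le
        · exact (if_neg (by linarith)).le
    rw [lintegral_congr hK, lintegral_indicator measurableSet_Ioo,
      Measure.restrict_congr_set Ioo_ae_eq_Ioc, lintegral_Ioc_rpow_sub_left hp hwv,
      abs_of_nonneg (sub_nonneg.mpr hwv)]
  · have hK : ∀ r, ENNReal.ofReal
        (if r < v then posRpowDeriv p (r - w) else posRpowDeriv p (w - r)) =
        (Ico v w).indicator (fun r ↦ ENNReal.ofReal (p * (w - r) ^ (p - 1))) r := by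
      intro r
      by_cases hr : r ∈ Ico v w
      · rw [indicator_of_mem hr, if_neg (not_lt.mpr hr.1), posRpowDeriv,
          if_pos (sub_pos.mpr hr.2)]
      · rw [indicator_of_notMem hr, ENNReal.ofReal_eq_zero]
        split_ifs with hrv
        · exact (if_neg (by linarith)).le
        · exact (if_neg (by simpa [not_lt.mp hrv] using hr)).le
    rw [lintegral_congr hK, lintegral_indicator measurableSet_Ico,
      Measure.restrict_congr_set Ico_ae_eq_Ioc, lintegral_Ioc_rpow_sub_right hp hvw.le,
      abs_of_neg (sub_neg.mpr hvw), neg_sub]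

end Kernel

theorem lintegral_ofReal_abs_sub_rpow_eq {α : Type*} [MeasurableSpace α] (μ : Measure α)
    [SFinite μ] {p : ℝ} (hp : 0 < p) {g f₀ : α → ℝ} (hg : Measurable g)
    (hf₀ : Measurable f₀) :
    ∫⁻ x, ENNReal.ofReal (|g x - f₀ x| ^ p) ∂μ =
      ∫⁻ r, (∫⁻ x in {x | r < g x}, ENNReal.ofReal (posRpowDeriv p (r - f₀ x)) ∂μ +
        ∫⁻ x in {x | g x ≤ r}, ENNReal.ofReal (posRpowDeriv p (f₀ x - r)) ∂μ) := by
  simp_rw [ofReal_abs_sub_rpow_eq_lintegral hp]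
  rw [lintegral_lintegral_swap (Measurable.aemeasurable (.ennreal_ofReal (.ite
    (measurableSet_lt measurable_snd (hg.comp measurable_fst))
    (measurable_posRpowDeriv.comp (measurable_snd.sub (hf₀.comp measurable_fst)))
    (measurable_posRpowDeriv.comp ((hf₀.comp measurable_fst).sub measurable_snd)))))]
  refine lintegral_congr fun r ↦ ?_
  have hS : MeasurableSet {x | r < g x} := measurableSet_lt measurable_const hg
  rw [← lintegral_add_compl _ hS, compl_ofPred]
  simp_rw [not_lt]
  congr 1
  · exact setLIntegral_congr_fun hS fun x (hx : r < g x) ↦ by rw [if_pos hx]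
  · exact setLIntegral_congr_fun (measurableSet_le hg measurable_const) fun x hx ↦ by
      rw [if_neg (not_lt.mpr hx)]

local notation "vol₁" => volume.restrict (Ioc (0:ℝ) 1)

instance : IsProbabilityMeasure vol₁ := ⟨by simp⟩

-- Truncated subtraction in `ℝ≥0∞` covers the case where `A` lies to the left of `B`.
theorem measure_inter_le_add_sub_one {A B : Set ℝ}
    (hA : ∀ x ∈ Ioc (0:ℝ) 1, x ∈ A → Ioc 0 x ⊆ A)
    (hB : ∀ x ∈ Ioc (0:ℝ) 1, x ∈ B → Icc x 1 ⊆ B) :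
    vol₁ (A ∩ B) ≤ vol₁ A + vol₁ B - 1 := by
  set a := (vol₁ A).toReal
  set b := (vol₁ B).toReal
  have hsub : A ∩ B ∩ Ioc 0 1 ⊆ Icc (1 - b) a := by
    rintro x ⟨⟨hxA, hxB⟩, hx⟩
    have ha := measure_mono (μ := vol₁) (hA x hx hxA)
    have hb := measure_mono (μ := vol₁) (hB x hx hxB)
    rw [Measure.restrict_eq_self _ (Ioc_subset_Ioc_right hx.2), Real.volume_Ioc,
      ENNReal.ofReal_le_iff_le_toReal (measure_ne_top _ _)] at ha
    rw [Measure.restrict_eq_self _ (Icc_subset_Ioc_iff hx.2 |>.mpr ⟨hx.1, le_rfl⟩),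
      Real.volume_Icc, ENNReal.ofReal_le_iff_le_toReal (measure_ne_top _ _)] at hb
    constructor <;> linarith
  calc vol₁ (A ∩ B) = volume (A ∩ B ∩ Ioc 0 1) := Measure.restrict_apply' measurableSet_Ioc
    _ ≤ volume (Icc (1 - b) a) := measure_mono hsub
    _ = ENNReal.ofReal (a + b) - ENNReal.ofReal 1 := by
      rw [Real.volume_Icc, ← ENNReal.ofReal_sub _ zero_le_one]
      ring_nf
    _ = vol₁ A + vol₁ B - 1 := by
      rw [ENNReal.ofReal_add ENNReal.toReal_nonneg ENNReal.toReal_nonneg, ENNReal.ofReal_one,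
        ENNReal.ofReal_toReal (measure_ne_top _ _), ENNReal.ofReal_toReal (measure_ne_top _ _)]

noncomputable def distribFun (f : ℝ → ℝ) : StieltjesFunction ℝ :=
  cdf (Measure.map f vol₁)

section Rearrangement

variable {f : ℝ → ℝ}

theorem distribFun_nonneg (c : ℝ) : 0 ≤ distribFun f c := cdf_nonneg _ c

theorem distribFun_le_one (c : ℝ) : distribFun f c ≤ 1 := cdf_le_one _ c

theorem ofReal_distribFun (hf : Measurable f) (c : ℝ) :
    ENNReal.ofReal (distribFun f c) = vol₁ {x | f x ≤ c} := by
  have := Measure.isProbabilityMeasure_map (μ := vol₁) hf.aemeasurable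
  rw [distribFun, ofReal_cdf, Measure.map_apply hf measurableSet_Iic]
  rfl

theorem distribFun_eq (hf : Measurable f) (c : ℝ) :
    distribFun f c = (vol₁ {x | f x ≤ c}).toReal := by
  rw [← ofReal_distribFun hf, ENNReal.toReal_ofReal (distribFun_nonneg c)]

theorem rearr_eq_sInf (hf : Measurable f) (x : ℝ) :
    rearr f x = sInf {y | x ≤ distribFun f y} := by
  simp_rw [rearr, distribFun_eq hf, Measure.restrict_apply' measurableSet_Ioc,
    inter_comm _ (Ioc (0:ℝ) 1)]
  congr! 5
  exact measure_congr (Ioc_ae_eq_Icc.inter (ae_eq_refl _)).symm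

theorem rearr_eq_zero_of_notMem (hf : Measurable f) {x : ℝ} (hx : x ∉ Ioc 0 1) :
    rearr f x = 0 := by
  rw [rearr_eq_sInf hf]
  rcases not_and_or.mp hx with hx | hx
  · simp [(not_lt.mp hx).trans (distribFun_nonneg _)]
  · simp [((distribFun_le_one _).trans_lt (not_le.mp hx)).not_ge]

variable {C : ℝ}

theorem rearr_le_iff (hf : Measurable f) (hC : ∀ x ∈ Ioc 0 1, f x ≤ C) {x : ℝ}
    (hx : x ∈ Ioc 0 1) (c : ℝ) : rearr f x ≤ c ↔ x ≤ distribFun f c := by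
  rw [rearr_eq_sInf hf]
  refine StieltjesFunction.csInf_le_iff ⟨C, ?_⟩ ?_
  · have hCsub : {x | f x ≤ C} ∩ Ioc 0 1 = Ioc 0 1 := inter_eq_right.mpr hC
    change x ≤ distribFun f C
    rw [distribFun_eq hf, Measure.restrict_apply' measurableSet_Ioc, hCsub]
    simpa using hx.2
  · obtain ⟨b, hb⟩ := ((tendsto_cdf_atBot _).eventually (gt_mem_nhds hx.1)).exists
    exact ⟨b, fun y hy ↦ le_of_not_gt fun hyb ↦
      (hy.trans (monotone_cdf _ hyb.le)).not_gt hb⟩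

theorem rearr_monotoneOn (hf : Measurable f) (hC : ∀ x ∈ Ioc 0 1, f x ≤ C) :
    MonotoneOn (rearr f) (Ioc 0 1) := fun _ hx _ hy hxy ↦
  (rearr_le_iff hf hC hx _).2 (hxy.trans ((rearr_le_iff hf hC hy _).1 le_rfl))

theorem rearr_le_inter_Ioc (hf : Measurable f) (hC : ∀ x ∈ Ioc 0 1, f x ≤ C) (c : ℝ) :
    {x | rearr f x ≤ c} ∩ Ioc 0 1 = Ioc 0 (distribFun f c) := by
  ext x
  by_cases hx : x ∈ Ioc 0 1
  · simp [hx, rearr_le_iff hf hC hx, hx.1]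
  · simp only [mem_inter_iff, hx, and_false, false_iff]
    exact fun h ↦ hx ⟨h.1, h.2.trans (distribFun_le_one c)⟩

theorem measurable_rearr (hf : Measurable f) (hC : ∀ x ∈ Ioc 0 1, f x ≤ C) :
    Measurable (rearr f) := by
  refine measurable_of_Iic fun c ↦ ?_
  have : rearr f ⁻¹' Iic c = Ioc 0 (distribFun f c) ∪ (Ioc 0 1)ᶜ ∩ {_x | 0 ≤ c} := by
    rw [← rearr_le_inter_Ioc hf hC]
    ext x
    by_cases hx : x ∈ Ioc 0 1 <;> simp [hx, rearr_eq_zero_of_notMem hf]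
  rw [this]
  exact measurableSet_Ioc.union (measurableSet_Ioc.compl.inter (MeasurableSet.const _))

theorem measure_rearr_le (hf : Measurable f) (hC : ∀ x ∈ Ioc 0 1, f x ≤ C) (c : ℝ) :
    vol₁ {x | rearr f x ≤ c} = vol₁ {x | f x ≤ c} := by
  rw [← ofReal_distribFun hf, Measure.restrict_apply' measurableSet_Ioc,
    rearr_le_inter_Ioc hf hC, Real.volume_Ioc, sub_zero]

theorem measure_lt_rearr (hf : Measurable f) (hC : ∀ x ∈ Ioc 0 1, f x ≤ C) (c : ℝ) :
    vol₁ {x | c < rearr f x} = vol₁ {x | c < f x} := by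
  simp_rw [← not_le, ← compl_ofPred]
  rw [prob_compl_eq_one_sub (measurableSet_le (measurable_rearr hf hC) measurable_const),
    prob_compl_eq_one_sub (measurableSet_le hf measurable_const), measure_rearr_le hf hC]

end Rearrangement

section Bathtub

variable {f : ℝ → ℝ} {C : ℝ} {h : ℝ → ℝ}

theorem setLIntegral_lt_rearr_le (hf : Measurable f) (hC : ∀ x ∈ Ioc 0 1, f x ≤ C)
    (h0 : 0 ≤ h) (hh : Measurable h) (hanti : AntitoneOn h (Ioc 0 1)) (c : ℝ) :
    ∫⁻ x in {x | c < rearr f x}, ENNReal.ofReal (h x) ∂vol₁ ≤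
      ∫⁻ x in {x | c < f x}, ENNReal.ofReal (h x) ∂vol₁ := by
  refine lintegral_ofReal_le_of_measure_lt_le h0 hh fun t ↦ ?_
  rw [Measure.restrict_apply (measurableSet_lt measurable_const hh),
    Measure.restrict_apply (measurableSet_lt measurable_const hh)]
  calc vol₁ ({x | t < h x} ∩ {x | c < rearr f x})
      ≤ vol₁ {x | t < h x} + vol₁ {x | c < rearr f x} - 1 := by
        refine measure_inter_le_add_sub_one (fun x hx hxt y hy ↦ ?_) (fun x hx hxc y hy ↦ ?_)
        · exact hxt.trans_le (hanti ⟨hy.1, hy.2.trans hx.2⟩ hx hy.2)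
        · exact hxc.trans_le (rearr_monotoneOn hf hC hx ⟨hx.1.trans_le hy.1, hy.2⟩ hy.1)
    _ = vol₁ {x | t < h x} + vol₁ {x | c < f x} - 1 := by rw [measure_lt_rearr hf hC]
    _ ≤ vol₁ ({x | t < h x} ∩ {x | c < f x}) :=
      add_sub_one_le_measure_inter _ (measurableSet_lt measurable_const hf)

theorem setLIntegral_rearr_le_le (hf : Measurable f) (hC : ∀ x ∈ Ioc 0 1, f x ≤ C)
    (h0 : 0 ≤ h) (hh : Measurable h) (hmono : MonotoneOn h (Ioc 0 1)) (c : ℝ) :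
    ∫⁻ x in {x | rearr f x ≤ c}, ENNReal.ofReal (h x) ∂vol₁ ≤
      ∫⁻ x in {x | f x ≤ c}, ENNReal.ofReal (h x) ∂vol₁ := by
  refine lintegral_ofReal_le_of_measure_lt_le h0 hh fun t ↦ ?_
  rw [Measure.restrict_apply (measurableSet_lt measurable_const hh),
    Measure.restrict_apply (measurableSet_lt measurable_const hh), inter_comm,
    inter_comm _ {x | f x ≤ c}]
  calc vol₁ ({x | rearr f x ≤ c} ∩ {x | t < h x})
      ≤ vol₁ {x | rearr f x ≤ c} + vol₁ {x | t < h x} - 1 := by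
        refine measure_inter_le_add_sub_one (fun x hx hxc y hy ↦ ?_) (fun x hx hxt y hy ↦ ?_)
        · exact (rearr_monotoneOn hf hC ⟨hy.1, hy.2.trans hx.2⟩ hx hy.2).trans hxc
        · exact hxt.trans_le (hmono hx ⟨hx.1.trans_le hy.1, hy.2⟩ hy.1)
    _ = vol₁ {x | f x ≤ c} + vol₁ {x | t < h x} - 1 := by rw [measure_rearr_le hf hC]
    _ ≤ vol₁ ({x | f x ≤ c} ∩ {x | t < h x}) :=
      add_sub_one_le_measure_inter _ (measurableSet_lt measurable_const hh)

end Bathtub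

theorem lintegral_rpow_abs_rearr_sub_le {f f₀ : ℝ → ℝ} {C p : ℝ} (hf : Measurable f)
    (hC : ∀ x ∈ Ioc 0 1, f x ≤ C) (hf₀ : Measurable f₀)
    (hmono : MonotoneOn f₀ (Ioc 0 1)) (hp : 1 ≤ p) :
    ∫⁻ x, ENNReal.ofReal (|rearr f x - f₀ x| ^ p) ∂vol₁ ≤
      ∫⁻ x, ENNReal.ofReal (|f x - f₀ x| ^ p) ∂vol₁ := by
  have hp0 : 0 < p := by linarith
  rw [lintegral_ofReal_abs_sub_rpow_eq _ hp0 (measurable_rearr hf hC) hf₀,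
    lintegral_ofReal_abs_sub_rpow_eq _ hp0 hf hf₀]
  refine lintegral_mono fun r ↦ add_le_add ?_ ?_
  · exact setLIntegral_lt_rearr_le hf hC (fun x ↦ posRpowDeriv_nonneg hp0.le _)
      (measurable_posRpowDeriv.comp (measurable_const.sub hf₀))
      (fun x hx y hy hxy ↦ monotone_posRpowDeriv hp (sub_le_sub_left (hmono hx hy hxy) r)) r
  · exact setLIntegral_rearr_le_le hf hC (fun x ↦ posRpowDeriv_nonneg hp0.le _)
      (measurable_posRpowDeriv.comp (hf₀.sub measurable_const))
      (fun x hx y hy hxy ↦ monotone_posRpowDeriv hp (sub_le_sub_right (hmono hx hy hxy) r)) r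

/-- Rearrangement weakly reduces the `L^p` estimation error against a
weakly increasing target, for every `p ∈ [1, ∞)`. -/
theorem rearr_reduces_Lp_error (K : Set ℝ) (hK : Bornology.IsBounded K)
    (f₀ fhat : ℝ → ℝ)
    (hf₀K : ∀ x ∈ Set.Icc (0:ℝ) 1, f₀ x ∈ K)
    (hfhatK : ∀ x ∈ Set.Icc (0:ℝ) 1, fhat x ∈ K)
    (hf₀mono : MonotoneOn f₀ (Set.Icc (0:ℝ) 1))
    (hf₀meas : Measurable f₀) (hfhatmeas : Measurable fhat)
    (p : ℝ) (hp : 1 ≤ p) :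
    (∫ x in Set.Icc (0:ℝ) 1, |rearr fhat x - f₀ x| ^ p) ^ (1 / p) ≤
      (∫ x in Set.Icc (0:ℝ) 1, |fhat x - f₀ x| ^ p) ^ (1 / p) := by
  obtain ⟨C, hC⟩ := hK.exists_norm_le
  have hfhatC : ∀ x ∈ Ioc 0 1, fhat x ≤ C := fun x hx ↦
    (abs_le.mp (hC _ (hfhatK x (Ioc_subset_Icc_self hx)))).2
  have hbound : ∀ x ∈ Ioc 0 1, ‖|fhat x - f₀ x| ^ p‖ ≤ (2 * C) ^ p := fun x hx ↦ by
    have h₀ := hC _ (hf₀K x (Ioc_subset_Icc_self hx))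
    have h₁ := hC _ (hfhatK x (Ioc_subset_Icc_self hx))
    rw [Real.norm_eq_abs] at h₀ h₁
    rw [Real.norm_of_nonneg (by positivity)]
    gcongr
    exact (abs_sub _ _).trans (by linarith)
  have hint : Integrable (fun x ↦ |fhat x - f₀ x| ^ p) vol₁ :=
    .of_bound ((hfhatmeas.sub hf₀meas).abs.pow_const p).aestronglyMeasurable _
      ((ae_restrict_iff' measurableSet_Ioc).mpr (.of_forall hbound))
  rw [← Measure.restrict_congr_set Ioc_ae_eq_Icc]
  refine Real.rpow_le_rpow (integral_nonneg fun _ ↦ by positivity) ?_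
    (one_div_nonneg.mpr (by linarith))
  exact integral_le_integral_of_lintegral_ofReal_le (fun _ ↦ by positivity)
    (fun _ ↦ by positivity)
    (((measurable_rearr hfhatmeas hfhatC).sub hf₀meas).abs.pow_const p).aestronglyMeasurable hint
    (lintegral_rpow_abs_rearr_sub_le hfhatmeas hfhatC hf₀meas
      (hf₀mono.mono Ioc_subset_Icc_self) hp)
end

section
/- Let f₀ : [0,1] → K be weakly increasing and measurable and f̂ : [0,1] → K measurable, K ⊂ ℝ bounded. The L^∞ error also weakly improves under rearrangement: ess sup_{x∈[0,1]} |f̂*(x) - f₀(x)| ≤ ess sup_{x∈[0,1]} |f̂(x) - f₀(x)|. -/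
/-! Let `M` be the essential supremum of `|f̂ - f₀|`, so that `f₀ - M ≤ f̂ ≤ f₀ + M` a.e. on
`[0,1]`. As both bounds are increasing, the sublevel set `{f̂ ≤ f₀ x' + M}` contains `[0,x']` up
to a null set, while `{f̂ ≤ y}` lies in `[0,x']` up to a null set once `y < f₀ x' - M`. Read through
the definition of the rearrangement this gives `f₀ x' - M ≤ f̂* x ≤ f₀ x'' + M` whenever
`x' < x ≤ x''`. Letting `x'` and `x''` tend to `x` yields `|f̂* x - f₀ x| ≤ M` at every interior
continuity point of `f₀`, hence almost everywhere because a monotone function has only countably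
many discontinuities. -/

open MeasureTheory

open Set Filter Topology

theorem MonotoneOn.ae_continuousAt {α β : Type*} [LinearOrder α] [TopologicalSpace α]
    [OrderTopology α] [MeasurableSpace α] [LinearOrder β] [TopologicalSpace β] [OrderTopology β]
    [SecondCountableTopology β] {μ : Measure α} [NullSingletonClass μ] {f : α → β} {U : Set α}
    (hU : IsOpen U) (hf : MonotoneOn f U) : ∀ᵐ x ∂μ, x ∈ U → ContinuousAt f x := by
  filter_upwards [hf.countable_not_continuousWithinAt.ae_notMem μ] with x hx hxU
  by_contra hcont
  exact hx ⟨hxU, (continuousWithinAt_iff_continuousAt (hU.mem_nhds hxU)).not.2 hcont⟩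

/-- `rearr f x` is definitionally `sInf {y | x ≤ sublevelVolume f y}`. -/
noncomputable def sublevelVolume (f : ℝ → ℝ) (y : ℝ) : ℝ :=
  volume.real (Icc 0 1 ∩ {t | f t ≤ y})

section
variable {f : ℝ → ℝ} {x b y : ℝ}

/-- `hb` bounds the set below; without it `sInf` would take the junk value `0`. -/
theorem rearr_le_of_forall_lt (hb : ∀ z < b, sublevelVolume f z < x)
    (hy : x ≤ sublevelVolume f y) : rearr f x ≤ y :=
  csInf_le ⟨b, fun _ hz => not_lt.1 fun hzb => (hb _ hzb).not_ge hz⟩ hy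

theorem le_rearr_of_forall_lt (hb : ∀ z < b, sublevelVolume f z < x)
    (hy : x ≤ sublevelVolume f y) : b ≤ rearr f x :=
  le_csInf ⟨y, hy⟩ fun _ hz => not_lt.1 fun hzb => (hb _ hzb).not_ge hz

end

section
variable {f h : ℝ → ℝ} {x' y : ℝ}

theorem le_sublevelVolume_of_ae_le (hh : MonotoneOn h (Icc 0 1))
    (hfh : ∀ᵐ t ∂volume.restrict (Icc 0 1), f t ≤ h t) (hx' : x' ∈ Icc 0 1) :
    x' ≤ sublevelVolume f (h x') := by
  have hsub : (Icc 0 x' : Set ℝ) ≤ᵐ[volume] (Icc 0 1 ∩ {t | f t ≤ h x'} : Set ℝ) := by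
    filter_upwards [(ae_restrict_iff' measurableSet_Icc).1 hfh] with t ht htx'
    have htI : t ∈ Icc (0:ℝ) 1 := ⟨htx'.1, htx'.2.trans hx'.2⟩
    exact ⟨htI, (ht htI).trans (hh htI hx' htx'.2)⟩
  calc x' = volume.real (Icc 0 x') := by rw [Real.volume_real_Icc_of_le hx'.1, sub_zero]
    _ ≤ sublevelVolume f (h x') :=
      ENNReal.toReal_mono ((measure_mono inter_subset_left).trans_lt measure_Icc_lt_top).ne
        (measure_mono_ae hsub)

theorem sublevelVolume_le_of_ae_le (hh : MonotoneOn h (Icc 0 1))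
    (hhf : ∀ᵐ t ∂volume.restrict (Icc 0 1), h t ≤ f t) (hx' : x' ∈ Icc 0 1) (hy : y < h x') :
    sublevelVolume f y ≤ x' := by
  have hsub : (Icc 0 1 ∩ {t | f t ≤ y} : Set ℝ) ≤ᵐ[volume] (Icc 0 x' : Set ℝ) := by
    filter_upwards [(ae_restrict_iff' measurableSet_Icc).1 hhf] with t ht ⟨htI, hty⟩
    exact ⟨htI.1, (hh.reflect_lt htI hx' ((ht htI).trans_lt (hty.trans_lt hy))).le⟩
  calc sublevelVolume f y ≤ volume.real (Icc 0 x') :=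
      ENNReal.toReal_mono measure_Icc_lt_top.ne (measure_mono_ae hsub)
    _ = x' := by rw [Real.volume_real_Icc_of_le hx'.1, sub_zero]

end

section
variable {f l u : ℝ → ℝ} {x x' : ℝ}

theorem rearr_le_of_ae_mem_Icc (hl : MonotoneOn l (Icc 0 1)) (hu : MonotoneOn u (Icc 0 1))
    (hf : ∀ᵐ t ∂volume.restrict (Icc 0 1), f t ∈ Icc (l t) (u t)) (hx : 0 < x) (hxx' : x ≤ x')
    (hx' : x' ≤ 1) : rearr f x ≤ u x' :=
  rearr_le_of_forall_lt (b := l 0)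
    (fun _ hz => (sublevelVolume_le_of_ae_le hl (hf.mono fun _ ht => ht.1) ⟨le_rfl, zero_le_one⟩
      hz).trans_lt hx)
    (hxx'.trans (le_sublevelVolume_of_ae_le hu (hf.mono fun _ ht => ht.2) ⟨hx.le.trans hxx', hx'⟩))

theorem le_rearr_of_ae_mem_Icc (hl : MonotoneOn l (Icc 0 1)) (hu : MonotoneOn u (Icc 0 1))
    (hf : ∀ᵐ t ∂volume.restrict (Icc 0 1), f t ∈ Icc (l t) (u t)) (hx' : 0 ≤ x') (hx'x : x' < x)
    (hx : x ≤ 1) : l x' ≤ rearr f x :=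
  le_rearr_of_forall_lt (y := u 1)
    (fun _ hz => (sublevelVolume_le_of_ae_le hl (hf.mono fun _ ht => ht.1)
      ⟨hx', hx'x.le.trans hx⟩ hz).trans_lt hx'x)
    (hx.trans (le_sublevelVolume_of_ae_le hu (hf.mono fun _ ht => ht.2) ⟨zero_le_one, le_rfl⟩))

end

theorem abs_rearr_sub_le_of_ae_abs_sub_le {f g : ℝ → ℝ} {M x : ℝ} (hg : MonotoneOn g (Icc 0 1))
    (hfg : ∀ᵐ t ∂volume.restrict (Icc 0 1), |f t - g t| ≤ M) (hx : x ∈ Ioo 0 1)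
    (hgx : ContinuousAt g x) : |rearr f x - g x| ≤ M := by
  have hf : ∀ᵐ t ∂volume.restrict (Icc 0 1), f t ∈ Icc (g t - M) (g t + M) :=
    hfg.mono fun t ht => ⟨by linarith [abs_le.1 ht], by linarith [abs_le.1 ht]⟩
  have hl : MonotoneOn (fun t => g t - M) (Icc 0 1) := fun _ ha _ hb hab =>
    sub_le_sub_right (hg ha hb hab) M
  have hu : MonotoneOn (fun t => g t + M) (Icc 0 1) := fun _ ha _ hb hab =>
    add_le_add_left (hg ha hb hab) M
  have hlower : ∀ᶠ x' in 𝓝[<] x, g x' - M ≤ rearr f x :=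
    eventually_of_mem (Ioo_mem_nhdsLT hx.1) fun _ hx' =>
      le_rearr_of_ae_mem_Icc (l := fun t => g t - M) hl hu hf hx'.1.le hx'.2 hx.2.le
  have hupper : ∀ᶠ x' in 𝓝[>] x, rearr f x ≤ g x' + M :=
    eventually_of_mem (Ioc_mem_nhdsGT hx.2) fun _ hx' =>
      rearr_le_of_ae_mem_Icc (u := fun t => g t + M) hl hu hf hx.1 hx'.1.le hx'.2
  have hgx_sub := le_of_tendsto ((hgx.tendsto.mono_left nhdsWithin_le_nhds).sub_const M) hlower
  have hgx_add := ge_of_tendsto ((hgx.tendsto.mono_left nhdsWithin_le_nhds).add_const M) hupper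
  exact abs_sub_le_iff.2 ⟨by linarith, by linarith⟩

theorem rearr_reduces_Linfty_error_general (K : Set ℝ) (hK : Bornology.IsBounded K)
    (f₀ fhat : ℝ → ℝ)
    (hf₀K : ∀ x ∈ Set.Icc (0:ℝ) 1, f₀ x ∈ K)
    (hfhatK : ∀ x ∈ Set.Icc (0:ℝ) 1, fhat x ∈ K)
    (hf₀mono : MonotoneOn f₀ (Set.Icc (0:ℝ) 1)) :
    essSup (fun x => |rearr fhat x - f₀ x|) (volume.restrict (Set.Icc (0:ℝ) 1)) ≤
      essSup (fun x => |fhat x - f₀ x|) (volume.restrict (Set.Icc (0:ℝ) 1)) := by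
  set μ := volume.restrict (Icc (0:ℝ) 1) with hμ
  have hbdd : IsBoundedUnder (· ≤ ·) (ae μ) fun x => |fhat x - f₀ x| :=
    isBoundedUnder_of_eventually_le <| (ae_restrict_mem measurableSet_Icc).mono fun x hx =>
      (Real.dist_eq _ _ ▸ Metric.dist_le_diam_of_mem hK (hfhatK x hx) (hf₀K x hx) :)
  have hIoo : ∀ᵐ x ∂μ, x ∈ Ioo 0 1 := by
    rw [hμ, ← Measure.restrict_congr_set Ioo_ae_eq_Icc]
    exact ae_restrict_mem measurableSet_Ioo
  have hcont : ∀ᵐ x ∂μ, x ∈ Ioo 0 1 → ContinuousAt f₀ x :=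
    ae_restrict_of_ae ((hf₀mono.mono Ioo_subset_Icc_self).ae_continuousAt isOpen_Ioo)
  have : (ae μ).NeBot := ae_restrict_neBot.2 (by simp)
  refine essSup_le_of_ae_le _ ?_ (isCoboundedUnder_le_of_le _ fun _ => abs_nonneg _)
  filter_upwards [hIoo, hcont] with x hx hxc
  exact abs_rearr_sub_le_of_ae_abs_sub_le hf₀mono (ae_le_essSup hbdd) hx (hxc hx)

/-- Rearrangement weakly reduces the `L^∞` (essential supremum) estimation error
against a weakly increasing target. -/
theorem rearr_reduces_Linfty_error (K : Set ℝ) (hK : Bornology.IsBounded K)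
    (f₀ fhat : ℝ → ℝ)
    (hf₀K : ∀ x ∈ Set.Icc (0:ℝ) 1, f₀ x ∈ K)
    (hfhatK : ∀ x ∈ Set.Icc (0:ℝ) 1, fhat x ∈ K)
    (hf₀mono : MonotoneOn f₀ (Set.Icc (0:ℝ) 1))
    (hf₀meas : Measurable f₀) (hfhatmeas : Measurable fhat) :
    essSup (fun x => |rearr fhat x - f₀ x|) (volume.restrict (Set.Icc (0:ℝ) 1)) ≤
      essSup (fun x => |fhat x - f₀ x|) (volume.restrict (Set.Icc (0:ℝ) 1)) :=
  rearr_reduces_Linfty_error_general K hK f₀ fhat hf₀K hfhatK hf₀mono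
end

section
/- Let f₀ : [0,1]^d → K be weakly increasing and measurable, f̂ : [0,1]^d → K measurable, and π a permutation of {1,…,d}. Then the π-rearranged estimate f̂*_π = R_{π₁} ⋯ R_{π_d} f̂ satisfies, for every p ∈ [1,∞): (∫ |f̂*_π(x) − f₀(x)|^p dx)^{1/p} ≤ (∫ |f̂(x) − f₀(x)|^p dx)^{1/p}. -/
open MeasureTheory

/-- Increasing rearrangement with respect to the `j`-th coordinate. -/
noncomputable def rearrCoord {d : ℕ} (j : Fin d) (f : (Fin d → ℝ) → ℝ)
    (x : Fin d → ℝ) : ℝ :=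
  sInf {y : ℝ | x j ≤
    (volume (Set.Icc (0:ℝ) 1 ∩ {t : ℝ | f (Function.update x j t) ≤ y})).toReal}

/-- The `π`-rearrangement `R_{π₁} ∘ ⋯ ∘ R_{π_d}`. -/
noncomputable def rearrPerm {d : ℕ} (π : Equiv.Perm (Fin d))
    (f : (Fin d → ℝ) → ℝ) : (Fin d → ℝ) → ℝ :=
  (List.ofFn (fun i => π i)).foldr (fun j g => rearrCoord j g) f

/-!
Each `rearrCoord j` acts on every line parallel to the `j`-th axis as the one-dimensional
increasing rearrangement (`quantile`), while `f₀` stays monotone along such a line. By Fubini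
along that axis it suffices to prove the one-dimensional contraction
`∫₀¹ |g* - h| ^ p ≤ ∫₀¹ |g - h| ^ p` for monotone `h`, and to iterate it over the coordinates.

For the contraction, write `|u - v| ^ p = ν {u ≤ a, b < v} + ν {v ≤ a, b < u}` for a
measure `ν` (`levelMeasure`) on pairs of levels `(a, b)`. By Tonelli, `∫ |u - v| ^ p` becomes
the `ν`-integral of `λ {u ≤ a, b < v} + λ {v ≤ a, b < u}`. When `g*` and `h` are both
increasing, their sublevel sets are, up to null sets, initial intervals of `[0, 1]` of lengths
`F_g(a)` and `F_h(b)` (`cdf`), so `λ {g* ≤ a, b < h} = (F_g(a) - F_h(b))⁺`, which is at most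
`λ {g ≤ a, b < h}`.
-/

open Set Filter Topology Function
open scoped ENNReal

namespace Rearrangement

noncomputable def distrib (g : ℝ → ℝ) (y : ℝ) : ℝ≥0∞ := volume (Icc (0 : ℝ) 1 ∩ {t | g t ≤ y})

noncomputable def cdf (g : ℝ → ℝ) (y : ℝ) : ℝ := (distrib g y).toReal

noncomputable def quantile (g : ℝ → ℝ) (s : ℝ) : ℝ := sInf {y | s ≤ cdf g y}

theorem rearrCoord_eq_quantile {d : ℕ} (j : Fin d) (f : (Fin d → ℝ) → ℝ) (x : Fin d → ℝ) :
    rearrCoord j f x = quantile (fun t => f (update x j t)) (x j) := rfl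

instance : IsProbabilityMeasure (volume.restrict (Icc (0 : ℝ) 1)) := ⟨by simp⟩

variable {g h : ℝ → ℝ} {C : ℝ}

theorem distrib_eq_restrict (g : ℝ → ℝ) (y : ℝ) :
    distrib g y = volume.restrict (Icc 0 1) {t | g t ≤ y} := by
  rw [Measure.restrict_apply' measurableSet_Icc, inter_comm, distrib]

theorem distrib_le_one (g : ℝ → ℝ) (y : ℝ) : distrib g y ≤ 1 :=
  (distrib_eq_restrict g y).trans_le prob_le_one

theorem distrib_ne_top (g : ℝ → ℝ) (y : ℝ) : distrib g y ≠ ∞ :=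
  ((distrib_le_one g y).trans_lt ENNReal.one_lt_top).ne

theorem distrib_mono (g : ℝ → ℝ) : Monotone (distrib g) := fun _ _ hyz =>
  measure_mono (inter_subset_inter_right _ fun _ ht => le_trans ht hyz)

theorem cdf_nonneg (g : ℝ → ℝ) (y : ℝ) : 0 ≤ cdf g y := ENNReal.toReal_nonneg

theorem cdf_le_one (g : ℝ → ℝ) (y : ℝ) : cdf g y ≤ 1 :=
  ENNReal.toReal_le_of_le_ofReal zero_le_one (by simpa using distrib_le_one g y)

theorem le_cdf_iff {s y : ℝ} : s ≤ cdf g y ↔ ENNReal.ofReal s ≤ distrib g y :=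
  (ENNReal.ofReal_le_iff_le_toReal (distrib_ne_top g y)).symm

theorem cdf_of_le (hgB : ∀ t ∈ Icc (0 : ℝ) 1, g t ∈ Icc (-C) C) {y : ℝ} (hy : C ≤ y) :
    cdf g y = 1 := by
  have : Icc (0 : ℝ) 1 ∩ {t | g t ≤ y} = Icc 0 1 :=
    inter_eq_left.2 fun t ht => (hgB t ht).2.trans hy
  simp [cdf, distrib, this]

theorem cdf_of_lt (hgB : ∀ t ∈ Icc (0 : ℝ) 1, g t ∈ Icc (-C) C) {y : ℝ} (hy : y < -C) :
    cdf g y = 0 := by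
  have : Icc (0 : ℝ) 1 ∩ {t | g t ≤ y} = ∅ :=
    eq_empty_of_forall_notMem fun t ⟨ht, hty⟩ => (hy.trans_le (hgB t ht).1).not_ge hty
  simp [cdf, distrib, this]

theorem tendsto_distrib_nhdsGT (hg : Measurable g) (y : ℝ) :
    Tendsto (distrib g) (𝓝[>] y) (𝓝 (distrib g y)) := by
  have hinter : ⋂ r > y, Icc (0 : ℝ) 1 ∩ {t | g t ≤ r} = Icc 0 1 ∩ {t | g t ≤ y} := by
    ext t
    simp only [mem_iInter, mem_inter_iff, mem_ofPred_eq]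
    exact ⟨fun H => ⟨(H (y + 1) (by linarith)).1,
      le_of_forall_gt_imp_ge_of_dense fun r hr => (H r hr).2⟩,
      fun ⟨ht, hty⟩ r hr => ⟨ht, hty.trans hr.le⟩⟩
  have := tendsto_measure_biInter_gt (μ := volume) (a := y)
    (s := fun r => Icc (0 : ℝ) 1 ∩ {t | g t ≤ r})
    (fun r _ => (measurableSet_Icc.inter (measurableSet_le hg measurable_const)).nullMeasurableSet)
    (fun _ _ _ hij => inter_subset_inter_right _ fun _ ht => le_trans ht hij)
    ⟨y + 1, by linarith, distrib_ne_top g _⟩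
  rwa [hinter] at this

theorem neg_le_of_le_cdf (hgB : ∀ t ∈ Icc (0 : ℝ) 1, g t ∈ Icc (-C) C) {s y : ℝ} (hs : 0 < s)
    (hy : s ≤ cdf g y) : -C ≤ y :=
  not_lt.1 fun hlt => (hy.trans_eq (cdf_of_lt hgB hlt)).not_gt hs

theorem bddBelow_setOf_le_cdf (hgB : ∀ t ∈ Icc (0 : ℝ) 1, g t ∈ Icc (-C) C) {s : ℝ} (hs : 0 < s) :
    BddBelow {y | s ≤ cdf g y} :=
  ⟨-C, fun _ hy => neg_le_of_le_cdf hgB hs hy⟩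

theorem quantile_le_iff (hg : Measurable g) (hgB : ∀ t ∈ Icc (0 : ℝ) 1, g t ∈ Icc (-C) C)
    {s y : ℝ} (hs : s ∈ Ioc 0 1) : quantile g s ≤ y ↔ s ≤ cdf g y := by
  have hne : {y | s ≤ cdf g y}.Nonempty := ⟨C, hs.2.trans_eq (cdf_of_le hgB le_rfl).symm⟩
  have hbdd := bddBelow_setOf_le_cdf hgB hs.1
  refine ⟨fun hQ => le_cdf_iff.2 ?_, fun hy => csInf_le hbdd hy⟩
  refine ge_of_tendsto (tendsto_distrib_nhdsGT hg y)
    (eventually_nhdsWithin_of_forall fun r hr => ?_)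
  obtain ⟨r', hr', hr'r⟩ := (csInf_lt_iff hbdd hne).1 (hQ.trans_lt hr)
  exact (le_cdf_iff.1 hr').trans (distrib_mono g hr'r.le)

theorem quantile_of_nonpos {s : ℝ} (hs : s ≤ 0) : quantile g s = 0 := by
  have : {y | s ≤ cdf g y} = univ := eq_univ_of_forall fun y => hs.trans (cdf_nonneg g y)
  rw [quantile, this, Real.sInf_of_not_bddBelow not_bddBelow_univ]

theorem quantile_of_one_lt {s : ℝ} (hs : 1 < s) : quantile g s = 0 := by
  have : {y | s ≤ cdf g y} = ∅ :=
    eq_empty_of_forall_notMem fun y hy => (hy.trans (cdf_le_one g y)).not_gt hs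
  rw [quantile, this, Real.sInf_empty]

theorem quantile_of_notMem {s : ℝ} (hs : s ∉ Ioc 0 1) : quantile g s = 0 := by
  rcases le_or_gt s 0 with hs0 | hs0
  · exact quantile_of_nonpos hs0
  · exact quantile_of_one_lt (not_le.1 fun hs1 => hs ⟨hs0, hs1⟩)

theorem quantile_le_iff_ite (hg : Measurable g) (hgB : ∀ t ∈ Icc (0 : ℝ) 1, g t ∈ Icc (-C) C)
    (s y : ℝ) : quantile g s ≤ y ↔ if s ∈ Ioc 0 1 then s ≤ cdf g y else 0 ≤ y := by
  split_ifs with hs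
  · exact quantile_le_iff hg hgB hs
  · rw [quantile_of_notMem hs]

theorem quantile_mem_Icc (hC : 0 ≤ C) (hgB : ∀ t ∈ Icc (0 : ℝ) 1, g t ∈ Icc (-C) C) (s : ℝ) :
    quantile g s ∈ Icc (-C) C := by
  by_cases hs : s ∈ Ioc 0 1
  · have hC_mem : C ∈ {y | s ≤ cdf g y} := hs.2.trans_eq (cdf_of_le hgB le_rfl).symm
    exact ⟨le_csInf ⟨C, hC_mem⟩ fun _ hy => neg_le_of_le_cdf hgB hs.1 hy,
      csInf_le (bddBelow_setOf_le_cdf hgB hs.1) hC_mem⟩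
  · rw [quantile_of_notMem hs]
    exact ⟨neg_nonpos.2 hC, hC⟩

theorem measurable_cdf_param {α : Type*} [MeasurableSpace α] {G : α → ℝ → ℝ}
    (hG : Measurable (uncurry G)) (y : ℝ) : Measurable fun a => cdf (G a) y := by
  have hE : MeasurableSet {q : α × ℝ | q.2 ∈ Icc (0 : ℝ) 1 ∧ G q.1 q.2 ≤ y} :=
    (measurable_snd measurableSet_Icc).inter (measurableSet_le hG measurable_const)
  exact ENNReal.measurable_toReal.comp (measurable_measure_prodMk_left hE)

theorem measurable_quantile_param {α : Type*} [MeasurableSpace α] {G : α → ℝ → ℝ}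
    (hG : Measurable (uncurry G)) (hGB : ∀ a, ∀ t ∈ Icc (0 : ℝ) 1, G a t ∈ Icc (-C) C) :
    Measurable fun q : α × ℝ => quantile (G q.1) q.2 := by
  refine measurable_of_Iic fun y => ?_
  have hGa : ∀ a, Measurable (G a) := fun a => hG.comp measurable_prodMk_left
  have : (fun q : α × ℝ => quantile (G q.1) q.2) ⁻¹' Iic y =
      {q | if q.2 ∈ Ioc 0 1 then q.2 ≤ cdf (G q.1) y else 0 ≤ y} := by
    ext q
    exact quantile_le_iff_ite (hGa q.1) (hGB q.1) q.2 y
  rw [this]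
  exact measurableSet_setOfPred.2 (Measurable.ite (measurable_snd measurableSet_Ioc)
    (measurableSet_setOfPred.1 (measurableSet_le measurable_snd
      ((measurable_cdf_param hG y).comp measurable_fst)))
    measurable_const)

theorem measurable_quantile (hg : Measurable g) (hgB : ∀ t ∈ Icc (0 : ℝ) 1, g t ∈ Icc (-C) C) :
    Measurable (quantile g) :=
  (measurable_quantile_param (G := fun _ : Unit => g) (hg.comp measurable_snd) fun _ => hgB).comp
    (measurable_prodMk_left (x := ()))

theorem distrib_congr {g' : ℝ → ℝ} (hgg' : EqOn g g' (Icc 0 1)) : distrib g = distrib g' := by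
  ext1 y
  refine congrArg volume (ext fun t => ?_)
  exact and_congr_right fun ht => by rw [mem_ofPred_eq, mem_ofPred_eq, hgg' ht]

theorem quantile_congr {g' : ℝ → ℝ} (hgg' : EqOn g g' (Icc 0 1)) :
    quantile g = quantile g' := by
  unfold quantile cdf
  rw [distrib_congr hgg']

theorem ae_eq_Ioc_of_Ioo_subset_of_subset_Icc {α : Type*} [PartialOrder α] [MeasurableSpace α]
    {μ : Measure α} [NullSingletonClass μ] {S : Set α} {a b : α} (h₁ : Ioo a b ⊆ S)
    (h₂ : S ⊆ Icc a b) : S =ᵐ[μ] Ioc a b :=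
  (h₂.eventuallyLE.trans Ioc_ae_eq_Icc.symm.le).antisymm
    (Ioo_ae_eq_Ioc.symm.le.trans h₁.eventuallyLE)

theorem sublevel_ae_eq_of_monotoneOn (hmono : MonotoneOn h (Icc 0 1)) (y : ℝ) :
    (Icc 0 1 ∩ {t | h t ≤ y} : Set ℝ) =ᵐ[volume] Ioc 0 (cdf h y) := by
  have hdown : ∀ t ∈ Icc 0 1 ∩ {t | h t ≤ y}, ∀ u ∈ Icc (0 : ℝ) 1, u ≤ t →
      u ∈ Icc 0 1 ∩ {t | h t ≤ y} :=
    fun t ⟨ht, hty⟩ u hu hut => ⟨hu, (hmono hu ht hut).trans hty⟩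
  refine ae_eq_Ioc_of_Ioo_subset_of_subset_Icc (fun t ⟨ht0, htc⟩ => ?_) fun t ht => ?_
  · by_contra htD
    have hsub : Icc 0 1 ∩ {t | h t ≤ y} ⊆ Ico 0 t := fun u hu =>
      ⟨hu.1.1, not_le.1 fun htu =>
        htD (hdown u hu t ⟨ht0.le, htc.le.trans (cdf_le_one h y)⟩ htu)⟩
    have : distrib h y ≤ ENNReal.ofReal t := (measure_mono hsub).trans (by simp)
    exact htc.not_ge (ENNReal.toReal_le_of_le_ofReal ht0.le this)
  · have hsub : Icc 0 t ⊆ Icc 0 1 ∩ {t | h t ≤ y} := fun u hu =>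
      hdown t ht u ⟨hu.1, hu.2.trans ht.1.2⟩ hu.2
    exact ⟨ht.1.1, le_cdf_iff.2 ((measure_mono hsub).trans' (by simp))⟩

theorem quantile_sublevel_ae_eq (hg : Measurable g)
    (hgB : ∀ t ∈ Icc (0 : ℝ) 1, g t ∈ Icc (-C) C) (y : ℝ) :
    (Icc 0 1 ∩ {s | quantile g s ≤ y} : Set ℝ) =ᵐ[volume] Ioc 0 (cdf g y) := by
  refine ae_eq_Ioc_of_Ioo_subset_of_subset_Icc (fun s ⟨hs0, hsc⟩ => ?_)
    fun s ⟨⟨hs0, hs1⟩, hsy⟩ => ?_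
  · have hs1 : s ≤ 1 := hsc.le.trans (cdf_le_one g y)
    exact ⟨⟨hs0.le, hs1⟩, (quantile_le_iff hg hgB ⟨hs0, hs1⟩).2 hsc.le⟩
  · rcases hs0.eq_or_lt with rfl | hs0
    · exact ⟨le_rfl, cdf_nonneg g y⟩
    · exact ⟨hs0.le, (quantile_le_iff hg hgB ⟨hs0, hs1⟩).1 hsy⟩

theorem volume_restrict_setOf_le_and_lt {u v : ℝ → ℝ} {y z a b : ℝ} (hb : 0 ≤ b)
    (hu : (Icc 0 1 ∩ {t | u t ≤ y} : Set ℝ) =ᵐ[volume] Ioc 0 a)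
    (hv : (Icc 0 1 ∩ {t | v t ≤ z} : Set ℝ) =ᵐ[volume] Ioc 0 b) :
    volume.restrict (Icc 0 1) {t | u t ≤ y ∧ z < v t} = ENNReal.ofReal (a - b) := by
  have hset : {t | u t ≤ y ∧ z < v t} ∩ Icc 0 1 =
      (Icc 0 1 ∩ {t | u t ≤ y}) \ (Icc 0 1 ∩ {t | v t ≤ z}) := by
    ext t
    simp only [mem_inter_iff, mem_ofPred_eq, Set.mem_sdiff, not_and, not_le]
    tauto
  have hIoc : Ioc (0 : ℝ) a \ Ioc 0 b = Ioc b a := by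
    ext t
    simp only [Set.mem_sdiff, mem_Ioc, not_and, not_le]
    constructor
    · rintro ⟨⟨ht0, hta⟩, htb⟩
      exact ⟨htb ht0, hta⟩
    · rintro ⟨hbt, hta⟩
      exact ⟨⟨hb.trans_lt hbt, hta⟩, fun _ => hbt⟩
  rw [Measure.restrict_apply' measurableSet_Icc, hset, measure_congr (hu.diff hv), hIoc,
    Real.volume_Ioc]

theorem ofReal_cdf_sub_cdf (g h : ℝ → ℝ) (y z : ℝ) :
    ENNReal.ofReal (cdf g y - cdf h z) = distrib g y - distrib h z := by
  rw [cdf, cdf, ENNReal.ofReal_sub _ ENNReal.toReal_nonneg,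
    ENNReal.ofReal_toReal (distrib_ne_top g y), ENNReal.ofReal_toReal (distrib_ne_top h z)]

theorem distrib_sub_distrib_le (g h : ℝ → ℝ) (y z : ℝ) :
    distrib g y - distrib h z ≤ volume.restrict (Icc 0 1) {t | g t ≤ y ∧ z < h t} := by
  have : {t | g t ≤ y} \ {t | h t ≤ z} = {t | g t ≤ y ∧ z < h t} := by
    ext t
    simp
  rw [distrib_eq_restrict, distrib_eq_restrict, ← this]
  exact le_measure_sdiff

theorem lintegral_Ioc_ofReal_eq_intervalIntegral {f : ℝ → ℝ} {u v : ℝ} (huv : u ≤ v)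
    (hf : IntervalIntegrable f volume u v) (hf₀ : ∀ z ∈ Ioc u v, 0 ≤ f z) :
    ∫⁻ z in Ioc u v, ENNReal.ofReal (f z) = ENNReal.ofReal (∫ z in u..v, f z) := by
  rw [intervalIntegral.integral_of_le huv, ofReal_integral_eq_lintegral_ofReal hf.1]
  filter_upwards [ae_restrict_mem measurableSet_Ioc] with z hz using hf₀ z hz

theorem lintegral_Ioc_mul_sub_rpow {q u v : ℝ} (hq : 0 < q) (huv : u ≤ v) :
    ∫⁻ z in Ioc u v, ENNReal.ofReal (q * (z - u) ^ (q - 1)) = ENNReal.ofReal ((v - u) ^ q) := by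
  have hint : IntervalIntegrable (fun z => q * (z - u) ^ (q - 1)) volume u v := by
    simpa using ((intervalIntegral.intervalIntegrable_rpow' (a := 0) (b := v - u)
      (by linarith : -1 < q - 1)).comp_sub_right u).const_mul q
  rw [lintegral_Ioc_ofReal_eq_intervalIntegral huv hint
    fun z hz => mul_nonneg hq.le (Real.rpow_nonneg (by linarith [hz.1]) _),
    intervalIntegral.integral_const_mul, intervalIntegral.integral_comp_sub_right
      (fun x => x ^ (q - 1)), integral_rpow (Or.inl (by linarith)), sub_self, sub_add_cancel,
    Real.zero_rpow hq.ne', sub_zero, mul_div_cancel₀ _ hq.ne']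

theorem lintegral_Ioc_mul_rsub_rpow {q u v : ℝ} (hq : 0 < q) (huv : u ≤ v) :
    ∫⁻ z in Ioc u v, ENNReal.ofReal (q * (v - z) ^ (q - 1)) = ENNReal.ofReal ((v - u) ^ q) := by
  have hint : IntervalIntegrable (fun z => q * (v - z) ^ (q - 1)) volume u v := by
    simpa using (((intervalIntegral.intervalIntegrable_rpow' (a := 0) (b := v - u)
      (by linarith : -1 < q - 1)).comp_sub_left v).symm).const_mul q
  rw [lintegral_Ioc_ofReal_eq_intervalIntegral huv hint
    fun z hz => mul_nonneg hq.le (Real.rpow_nonneg (by linarith [hz.2]) _),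
    intervalIntegral.integral_const_mul, intervalIntegral.integral_comp_sub_left
      (fun x => x ^ (q - 1)), integral_rpow (Or.inl (by linarith)), sub_self, sub_add_cancel,
    Real.zero_rpow hq.ne', sub_zero, mul_div_cancel₀ _ hq.ne']

def levelRect (u v : ℝ) : Set (ℝ × ℝ) := {q | u ≤ q.1 ∧ q.2 < v}

theorem measurableSet_levelRect (u v : ℝ) : MeasurableSet (levelRect u v) :=
  (measurableSet_le measurable_const measurable_fst).inter
    (measurableSet_lt measurable_snd measurable_const)

noncomputable def levelDensity (p : ℝ) (q : ℝ × ℝ) : ℝ≥0∞ :=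
  ENNReal.ofReal (p * ((p - 1) * (q.2 - q.1) ^ (p - 2)))

theorem lintegral_indicator_levelDensity_slice {p a b : ℝ} (hp : 1 < p) (y : ℝ) :
    ∫⁻ z, (levelRect a b ∩ {q | q.1 ≤ q.2}).indicator (levelDensity p) (y, z) =
      (Ico a b).indicator (fun y => ENNReal.ofReal (p * (b - y) ^ (p - 1))) y := by
  by_cases hy : y ∈ Ico a b
  · have hslice : (fun z => (levelRect a b ∩ {q | q.1 ≤ q.2}).indicator (levelDensity p) (y, z)) =
        (Ico y b).indicator fun z => levelDensity p (y, z) := by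
      ext z
      by_cases hz : z ∈ Ico y b
      · simp_all [levelRect]
      · rw [indicator_of_notMem hz, indicator_of_notMem]
        exact fun ⟨⟨_, hzb⟩, hyz⟩ => hz ⟨hyz, hzb⟩
    have hexp : p - 2 = (p - 1) - 1 := by ring
    rw [hslice, lintegral_indicator measurableSet_Ico, indicator_of_mem hy]
    simp only [levelDensity, ENNReal.ofReal_mul (by linarith : (0:ℝ) ≤ p)]
    rw [lintegral_const_mul' _ _ ENNReal.ofReal_ne_top, Measure.restrict_congr_set Ico_ae_eq_Ioc,
      hexp, lintegral_Ioc_mul_sub_rpow (by linarith) hy.2.le]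
  · rw [indicator_of_notMem hy]
    refine (lintegral_congr fun z => indicator_of_notMem ?_ _).trans lintegral_zero
    exact fun ⟨⟨hay, hzb⟩, hyz⟩ => hy ⟨hay, hyz.trans_lt hzb⟩

theorem setLIntegral_levelDensity {p a b : ℝ} (hp : 1 < p) (hab : a ≤ b) :
    ∫⁻ q in levelRect a b ∩ {q | q.1 ≤ q.2}, levelDensity p q = ENNReal.ofReal ((b - a) ^ p) := by
  have hT : MeasurableSet (levelRect a b ∩ {q | q.1 ≤ q.2}) :=
    (measurableSet_levelRect a b).inter (measurableSet_le measurable_fst measurable_snd)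
  have hρ : Measurable (levelDensity p) := by unfold levelDensity; fun_prop
  rw [Measure.volume_eq_prod, ← lintegral_indicator hT,
    lintegral_prod _ (hρ.indicator hT).aemeasurable,
    lintegral_congr (lintegral_indicator_levelDensity_slice hp),
    lintegral_indicator measurableSet_Ico, Measure.restrict_congr_set Ico_ae_eq_Ioc,
    lintegral_Ioc_mul_rsub_rpow (by linarith) hab]

/-- The second derivative `p (p - 1) (b - a) ^ (p - 2)` of `x ↦ x ^ p` spread over `{a ≤ b}`
(Lebesgue measure on the diagonal when `p = 1`), so that `ν (levelRect u v) = (v - u) ^ p`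
for `-C ≤ u ≤ v ≤ C`. -/
noncomputable def levelMeasure (p C : ℝ) : Measure (ℝ × ℝ) :=
  if p = 1 then (volume.restrict (Ico (-C) C)).map fun y => (y, y)
  else (volume.restrict (levelRect (-C) C ∩ {q | q.1 ≤ q.2})).withDensity (levelDensity p)

instance (p C : ℝ) : SFinite (levelMeasure p C) := by
  unfold levelMeasure
  split_ifs <;> infer_instance

theorem levelMeasure_levelRect_of_le {p C a b : ℝ} (hp : 1 ≤ p) (ha : -C ≤ a) (hb : b ≤ C)
    (hab : a ≤ b) : levelMeasure p C (levelRect a b) = ENNReal.ofReal ((b - a) ^ p) := by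
  rcases hp.eq_or_lt with rfl | hp
  · have hpre : (fun y : ℝ => (y, y)) ⁻¹' levelRect a b = Ico a b := rfl
    rw [levelMeasure, if_pos rfl, Measure.map_apply (by fun_prop) (measurableSet_levelRect a b),
      hpre, Measure.restrict_apply measurableSet_Ico,
      inter_eq_left.2 (Ico_subset_Ico ha hb), Real.volume_Ico, Real.rpow_one]
  · have hsub : levelRect a b ⊆ levelRect (-C) C := fun q hq => ⟨ha.trans hq.1, hq.2.trans_le hb⟩
    rw [levelMeasure, if_neg hp.ne', withDensity_apply _ (measurableSet_levelRect a b),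
      Measure.restrict_restrict (measurableSet_levelRect a b), ← inter_assoc,
      inter_eq_left.2 hsub, setLIntegral_levelDensity hp hab]

theorem levelMeasure_levelRect_of_ge {p C a b : ℝ} (hba : b ≤ a) :
    levelMeasure p C (levelRect a b) = 0 := by
  unfold levelMeasure
  split_ifs
  · have hpre : (fun y : ℝ => (y, y)) ⁻¹' levelRect a b = Ico a b := rfl
    rw [Measure.map_apply (by fun_prop) (measurableSet_levelRect a b), hpre,
      Ico_eq_empty_of_le hba, measure_empty]
  · have hempty : levelRect a b ∩ (levelRect (-C) C ∩ {q | q.1 ≤ q.2}) = ∅ :=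
      eq_empty_of_forall_notMem fun q ⟨hq, _, hq12⟩ => (hq.2.trans_le (hba.trans hq.1)).not_ge hq12
    rw [withDensity_apply _ (measurableSet_levelRect a b),
      Measure.restrict_restrict (measurableSet_levelRect a b), hempty, Measure.restrict_empty,
      lintegral_zero_measure]

theorem ofReal_abs_sub_rpow_eq {p C u v : ℝ} (hp : 1 ≤ p) (hu : u ∈ Icc (-C) C)
    (hv : v ∈ Icc (-C) C) : ENNReal.ofReal (|u - v| ^ p) =
      levelMeasure p C (levelRect u v) + levelMeasure p C (levelRect v u) := by
  rcases le_total u v with huv | hvu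
  · rw [levelMeasure_levelRect_of_le hp hu.1 hv.2 huv, levelMeasure_levelRect_of_ge huv, add_zero,
      abs_sub_comm, abs_of_nonneg (sub_nonneg.2 huv)]
  · rw [levelMeasure_levelRect_of_ge hvu, levelMeasure_levelRect_of_le hp hv.1 hu.2 hvu, zero_add,
      abs_of_nonneg (sub_nonneg.2 hvu)]

section

variable {α : Type*} [MeasurableSpace α]

theorem measurableSet_levelRect_param {u v : α → ℝ} (hu : Measurable u) (hv : Measurable v) :
    MeasurableSet {w : (ℝ × ℝ) × α | w.1 ∈ levelRect (u w.2) (v w.2)} :=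
  (measurableSet_le (hu.comp measurable_snd) measurable_fst.fst).inter
    (measurableSet_lt measurable_fst.snd (hv.comp measurable_snd))

theorem lintegral_measure_setOf_le_and_lt {μ : Measure α} [SFinite μ] {ν : Measure (ℝ × ℝ)}
    [SFinite ν] {u v : α → ℝ} (hu : Measurable u) (hv : Measurable v) :
    ∫⁻ q, μ {t | u t ≤ q.1 ∧ q.2 < v t} ∂ν = ∫⁻ t, ν (levelRect (u t) (v t)) ∂μ :=
  (Measure.prod_apply (measurableSet_levelRect_param hu hv)).symm.trans
    (Measure.prod_apply_symm (measurableSet_levelRect_param hu hv))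

theorem lintegral_ofReal_abs_sub_rpow_eq {p C : ℝ} (hp : 1 ≤ p) {μ : Measure α} [SFinite μ]
    {u v : α → ℝ} (hu : Measurable u) (hv : Measurable v) (huB : ∀ᵐ t ∂μ, u t ∈ Icc (-C) C)
    (hvB : ∀ᵐ t ∂μ, v t ∈ Icc (-C) C) :
    ∫⁻ t, ENNReal.ofReal (|u t - v t| ^ p) ∂μ = ∫⁻ q, (μ {t | u t ≤ q.1 ∧ q.2 < v t} +
      μ {t | v t ≤ q.1 ∧ q.2 < u t}) ∂levelMeasure p C := by
  have h₁ : Measurable fun q : ℝ × ℝ => μ {t | u t ≤ q.1 ∧ q.2 < v t} :=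
    measurable_measure_prodMk_left (measurableSet_levelRect_param hu hv)
  have h₂ : Measurable fun t => levelMeasure p C (levelRect (u t) (v t)) :=
    measurable_measure_prodMk_right (measurableSet_levelRect_param hu hv)
  rw [lintegral_add_left h₁, lintegral_measure_setOf_le_and_lt hu hv,
    lintegral_measure_setOf_le_and_lt hv hu, ← lintegral_add_left h₂]
  refine lintegral_congr_ae ?_
  filter_upwards [huB, hvB] with t hut hvt using ofReal_abs_sub_rpow_eq hp hut hvt

end

theorem lintegral_quantile_sub_rpow_le {p : ℝ} (hp : 1 ≤ p) (hC : 0 ≤ C) (hg : Measurable g)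
    (hgB : ∀ t ∈ Icc (0 : ℝ) 1, g t ∈ Icc (-C) C) (hh : Measurable h)
    (hhB : ∀ t ∈ Icc (0 : ℝ) 1, h t ∈ Icc (-C) C) (hmono : MonotoneOn h (Icc 0 1)) :
    ∫⁻ s in Icc 0 1, ENNReal.ofReal (|quantile g s - h s| ^ p) ≤
      ∫⁻ t in Icc 0 1, ENNReal.ofReal (|g t - h t| ^ p) := by
  have hgB' := (ae_restrict_mem (μ := volume) measurableSet_Icc).mono hgB
  have hhB' := (ae_restrict_mem (μ := volume) measurableSet_Icc).mono hhB
  rw [lintegral_ofReal_abs_sub_rpow_eq hp (measurable_quantile hg hgB) hh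
      (ae_of_all _ (quantile_mem_Icc hC hgB)) hhB',
    lintegral_ofReal_abs_sub_rpow_eq hp hg hh hgB' hhB']
  refine lintegral_mono fun q => add_le_add ?_ ?_
  · rw [volume_restrict_setOf_le_and_lt (cdf_nonneg h q.2) (quantile_sublevel_ae_eq hg hgB q.1)
      (sublevel_ae_eq_of_monotoneOn hmono q.2), ofReal_cdf_sub_cdf]
    exact distrib_sub_distrib_le g h q.1 q.2
  · rw [volume_restrict_setOf_le_and_lt (cdf_nonneg g q.2) (sublevel_ae_eq_of_monotoneOn hmono q.1)
      (quantile_sublevel_ae_eq hg hgB q.2), ofReal_cdf_sub_cdf]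
    exact distrib_sub_distrib_le h g q.1 q.2

section Marginal

variable {ι : Type*} [DecidableEq ι] {X : ι → Type*} [∀ i, MeasurableSpace (X i)]
  {μ : ∀ i, Measure (X i)} [∀ i, IsProbabilityMeasure (μ i)]

theorem lmarginal_singleton_idem (F : (∀ i, X i) → ℝ≥0∞) (j : ι) :
    ∫⋯∫⁻_{j}, (∫⋯∫⁻_{j}, F ∂μ) ∂μ = ∫⋯∫⁻_{j}, F ∂μ := by
  ext x
  simp_rw [lmarginal_singleton (f := ∫⋯∫⁻_{j}, F ∂μ),
    lmarginal_update_of_mem μ (Finset.mem_singleton_self j), lintegral_const, measure_univ, mul_one]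

theorem lintegral_lmarginal_singleton [Fintype ι] {F : (∀ i, X i) → ℝ≥0∞} (hF : Measurable F)
    (j : ι) : ∫⁻ x, (∫⋯∫⁻_{j}, F ∂μ) x ∂Measure.pi μ = ∫⁻ x, F x ∂Measure.pi μ :=
  lintegral_eq_of_lmarginal_eq {j} (hF.lmarginal μ) hF (lmarginal_singleton_idem F j)

end Marginal

section Cube

variable {ι : Type*}

theorem update_mem_cube [DecidableEq ι] {x : ι → ℝ} (hx : x ∈ Icc 0 1) {j : ι} {t : ℝ}
    (ht : t ∈ Icc 0 1) : update x j t ∈ Icc (0 : ι → ℝ) 1 := by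
  rw [← pi_univ_Icc] at hx ⊢
  exact update_mem_pi_iff_of_mem hx |>.2 fun _ => ht

theorem volume_restrict_cube [Fintype ι] :
    volume.restrict (Icc (0 : ι → ℝ) 1) = Measure.pi fun _ => volume.restrict (Icc (0 : ℝ) 1) := by
  rw [volume_pi, ← pi_univ_Icc, Measure.restrict_pi_pi]
  rfl

theorem setLIntegral_cube_eq_lintegral_update [Fintype ι] [DecidableEq ι]
    {F : (ι → ℝ) → ℝ≥0∞} (hF : Measurable F) (j : ι) :
    ∫⁻ x in Icc 0 1, F x = ∫⁻ x in Icc 0 1, ∫⁻ t in Icc 0 1, F (update x j t) := by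
  rw [volume_restrict_cube, ← lintegral_lmarginal_singleton hF j, lmarginal_singleton]

theorem setLIntegral_cube_mono_of_update [Fintype ι] [DecidableEq ι] {F G : (ι → ℝ) → ℝ≥0∞}
    (hF : Measurable F) (hG : Measurable G) (j : ι)
    (h : ∀ x ∈ Icc (0 : ι → ℝ) 1,
      ∫⁻ t in Icc 0 1, F (update x j t) ≤ ∫⁻ t in Icc 0 1, G (update x j t)) :
    ∫⁻ x in Icc 0 1, F x ≤ ∫⁻ x in Icc 0 1, G x := by
  rw [setLIntegral_cube_eq_lintegral_update hF j, setLIntegral_cube_eq_lintegral_update hG j]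
  exact setLIntegral_mono' measurableSet_Icc h

end Cube

section Coordinatewise

variable {d : ℕ} {f f₀ : (Fin d → ℝ) → ℝ}

theorem rearrCoord_update (j : Fin d) (f : (Fin d → ℝ) → ℝ) (x : Fin d → ℝ) (t : ℝ) :
    rearrCoord j f (update x j t) = quantile (fun u => f (update x j u)) t := by
  simp [rearrCoord_eq_quantile]

theorem measurable_rearrCoord (j : Fin d) (hf : Measurable f) (hfB : ∀ x, f x ∈ Icc (-C) C) :
    Measurable (rearrCoord j f) :=
  (measurable_quantile_param (G := fun x t => f (update x j t)) (hf.comp measurable_update')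
    fun _ _ _ => hfB _).comp (measurable_id.prodMk (measurable_pi_apply j))

theorem rearrCoord_mem_Icc (j : Fin d) (hC : 0 ≤ C) (hfB : ∀ x, f x ∈ Icc (-C) C)
    (x : Fin d → ℝ) : rearrCoord j f x ∈ Icc (-C) C :=
  quantile_mem_Icc hC (fun _ _ => hfB _) _

theorem rearrCoord_congr (j : Fin d) {f f' : (Fin d → ℝ) → ℝ} (h : EqOn f f' (Icc 0 1)) :
    EqOn (rearrCoord j f) (rearrCoord j f') (Icc 0 1) := fun x hx => by
  rw [rearrCoord_eq_quantile, rearrCoord_eq_quantile,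
    quantile_congr fun t ht => h (update_mem_cube hx ht)]

theorem lintegral_rearrCoord_sub_rpow_le {p : ℝ} (hp : 1 ≤ p) (hC : 0 ≤ C) (j : Fin d)
    (hf : Measurable f) (hfB : ∀ x, f x ∈ Icc (-C) C) (hf₀ : Measurable f₀)
    (hf₀B : ∀ x ∈ Icc (0 : Fin d → ℝ) 1, f₀ x ∈ Icc (-C) C)
    (hf₀mono : MonotoneOn f₀ (Icc 0 1)) :
    ∫⁻ x in Icc 0 1, ENNReal.ofReal (|rearrCoord j f x - f₀ x| ^ p) ≤
      ∫⁻ x in Icc 0 1, ENNReal.ofReal (|f x - f₀ x| ^ p) := by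
  have hR := measurable_rearrCoord j hf hfB
  refine setLIntegral_cube_mono_of_update (by fun_prop) (by fun_prop) j fun x hx => ?_
  simp only [rearrCoord_update]
  exact lintegral_quantile_sub_rpow_le (g := fun t => f (update x j t))
    (h := fun t => f₀ (update x j t)) hp hC (hf.comp (measurable_update x)) (fun _ _ => hfB _)
    (hf₀.comp (measurable_update x)) (fun t ht => hf₀B _ (update_mem_cube hx ht))
    fun t ht t' ht' htt' => hf₀mono (update_mem_cube hx ht) (update_mem_cube hx ht')
      (update_mono htt')

end Coordinatewise

theorem integral_le_integral_of_lintegral_ofReal_le {α : Type*} [MeasurableSpace α]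
    {μ : Measure α} {F G : α → ℝ} (hF₀ : 0 ≤ᵐ[μ] F) (hFm : AEStronglyMeasurable F μ)
    (hG₀ : 0 ≤ᵐ[μ] G) (hGm : AEStronglyMeasurable G μ) (hG : ∫⁻ a, ENNReal.ofReal (G a) ∂μ ≠ ∞)
    (h : ∫⁻ a, ENNReal.ofReal (F a) ∂μ ≤ ∫⁻ a, ENNReal.ofReal (G a) ∂μ) :
    ∫ a, F a ∂μ ≤ ∫ a, G a ∂μ := by
  rw [integral_eq_lintegral_of_nonneg_ae hF₀ hFm, integral_eq_lintegral_of_nonneg_ae hG₀ hGm]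
  exact ENNReal.toReal_mono hG h

theorem setLIntegral_ofReal_abs_sub_rpow_ne_top {α : Type*} [MeasurableSpace α]
    {μ : Measure α} {s : Set α} (hs : μ s ≠ ∞) {p : ℝ} (hp : 0 ≤ p) {u v : α → ℝ}
    (hu : ∀ x ∈ s, u x ∈ Icc (-C) C) (hv : ∀ x ∈ s, v x ∈ Icc (-C) C) :
    ∫⁻ x in s, ENNReal.ofReal (|u x - v x| ^ p) ∂μ ≠ ∞ := by
  refine (setLIntegral_lt_top_of_le_nnreal hs
    ⟨((2 * C) ^ p).toNNReal, fun x hx => ENNReal.ofReal_le_ofReal ?_⟩).ne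
  have hux := hu x hx
  have hvx := hv x hx
  exact Real.rpow_le_rpow (abs_nonneg _)
    (abs_sub_le_iff.2 ⟨by linarith [hux.2, hvx.1], by linarith [hux.1, hvx.2]⟩) hp

section Iterated

variable {d : ℕ} {f f₀ : (Fin d → ℝ) → ℝ}

noncomputable def rearrList (L : List (Fin d)) (f : (Fin d → ℝ) → ℝ) : (Fin d → ℝ) → ℝ :=
  L.foldr (fun j g => rearrCoord j g) f

theorem rearrPerm_eq_rearrList (π : Equiv.Perm (Fin d)) (f : (Fin d → ℝ) → ℝ) :
    rearrPerm π f = rearrList (List.ofFn fun i => π i) f := rfl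

theorem measurable_rearrList_and_mem (hC : 0 ≤ C) (hf : Measurable f)
    (hfB : ∀ x, f x ∈ Icc (-C) C) :
    ∀ L : List (Fin d), Measurable (rearrList L f) ∧ ∀ x, rearrList L f x ∈ Icc (-C) C
  | [] => ⟨hf, hfB⟩
  | j :: L =>
    have ih := measurable_rearrList_and_mem hC hf hfB L
    ⟨measurable_rearrCoord j ih.1 ih.2, rearrCoord_mem_Icc j hC ih.2⟩

theorem rearrList_congr {f' : (Fin d → ℝ) → ℝ} (h : EqOn f f' (Icc 0 1)) :
    ∀ L : List (Fin d), EqOn (rearrList L f) (rearrList L f') (Icc 0 1)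
  | [] => h
  | j :: L => rearrCoord_congr j (rearrList_congr h L)

theorem lintegral_rearrList_sub_rpow_le {p : ℝ} (hp : 1 ≤ p) (hC : 0 ≤ C) (hf : Measurable f)
    (hfB : ∀ x, f x ∈ Icc (-C) C) (hf₀ : Measurable f₀)
    (hf₀B : ∀ x ∈ Icc (0 : Fin d → ℝ) 1, f₀ x ∈ Icc (-C) C)
    (hf₀mono : MonotoneOn f₀ (Icc 0 1)) :
    ∀ L : List (Fin d), ∫⁻ x in Icc 0 1, ENNReal.ofReal (|rearrList L f x - f₀ x| ^ p) ≤
      ∫⁻ x in Icc 0 1, ENNReal.ofReal (|f x - f₀ x| ^ p)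
  | [] => le_rfl
  | j :: L =>
    have hL := measurable_rearrList_and_mem hC hf hfB L
    (lintegral_rearrCoord_sub_rpow_le hp hC j hL.1 hL.2 hf₀ hf₀B hf₀mono).trans
      (lintegral_rearrList_sub_rpow_le hp hC hf hfB hf₀ hf₀B hf₀mono L)

theorem rpow_setIntegral_rearrList_sub_le {p : ℝ} (hp : 1 ≤ p) (hC : 0 ≤ C)
    (hf : Measurable f) (hfB : ∀ x, f x ∈ Icc (-C) C) (hf₀ : Measurable f₀)
    (hf₀B : ∀ x ∈ Icc (0 : Fin d → ℝ) 1, f₀ x ∈ Icc (-C) C)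
    (hf₀mono : MonotoneOn f₀ (Icc 0 1)) (L : List (Fin d)) :
    (∫ x in Icc 0 1, |rearrList L f x - f₀ x| ^ p) ^ (1 / p) ≤
      (∫ x in Icc 0 1, |f x - f₀ x| ^ p) ^ (1 / p) := by
  have hR := (measurable_rearrList_and_mem hC hf hfB L).1
  refine Real.rpow_le_rpow (setIntegral_nonneg measurableSet_Icc fun _ _ => by positivity) ?_
    (by positivity)
  exact integral_le_integral_of_lintegral_ofReal_le (ae_of_all _ fun _ => by positivity)
    ((hR.sub hf₀).abs.pow_const p).aestronglyMeasurable (ae_of_all _ fun _ => by positivity)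
    ((hf.sub hf₀).abs.pow_const p).aestronglyMeasurable
    (setLIntegral_ofReal_abs_sub_rpow_ne_top isCompact_Icc.measure_lt_top.ne (by linarith)
      (fun x _ => hfB x) hf₀B)
    (lintegral_rearrList_sub_rpow_le hp hC hf hfB hf₀ hf₀B hf₀mono L)

end Iterated

end Rearrangement

open Rearrangement

/-- The `π`-rearranged estimate weakly reduces the `L^p` estimation error against
a weakly increasing target, for every `p ∈ [1,∞)`. -/
theorem rearrPerm_reduces_Lp_error {d : ℕ} (π : Equiv.Perm (Fin d)) (K : Set ℝ)
    (hK : Bornology.IsBounded K)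
    (f₀ fhat : (Fin d → ℝ) → ℝ)
    (hf₀K : ∀ x ∈ Set.Icc (0 : Fin d → ℝ) 1, f₀ x ∈ K)
    (hfhatK : ∀ x ∈ Set.Icc (0 : Fin d → ℝ) 1, fhat x ∈ K)
    (hf₀mono : MonotoneOn f₀ (Set.Icc (0 : Fin d → ℝ) 1))
    (hf₀meas : Measurable f₀) (hfhatmeas : Measurable fhat)
    (p : ℝ) (hp : 1 ≤ p) :
    (∫ x in Set.Icc (0 : Fin d → ℝ) 1, |rearrPerm π fhat x - f₀ x| ^ p) ^ (1 / p) ≤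
      (∫ x in Set.Icc (0 : Fin d → ℝ) 1, |fhat x - f₀ x| ^ p) ^ (1 / p) := by
  obtain ⟨C, hC, hKC⟩ : ∃ C, 0 < C ∧ K ⊆ Icc (-C) C := by
    obtain ⟨C, hC, hK⟩ := hK.subset_closedBall_lt 0 0
    exact ⟨C, hC, by simpa [Real.closedBall_eq_Icc] using hK⟩
  -- The rearrangements only read `fhat` on the cube; extended by zero it is bounded everywhere.
  set f := (Icc (0 : Fin d → ℝ) 1).indicator fhat
  have hf : Measurable f := hfhatmeas.indicator measurableSet_Icc
  have hfB : ∀ x, f x ∈ Icc (-C) C := fun x => by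
    by_cases hx : x ∈ Icc (0 : Fin d → ℝ) 1
    · simpa [f, hx] using hKC (hfhatK x hx)
    · simp [f, hx, hC.le]
  have hfhat : EqOn f fhat (Icc 0 1) := fun x hx => indicator_of_mem hx fhat
  have hR : EqOn (rearrList (List.ofFn fun i => π i) f) (rearrPerm π fhat) (Icc 0 1) := by
    rw [rearrPerm_eq_rearrList]
    exact rearrList_congr hfhat _
  convert rpow_setIntegral_rearrList_sub_le hp hC.le hf hfB hf₀meas
    (fun x hx => hKC (hf₀K x hx)) hf₀mono (List.ofFn fun i => π i) using 2
  · exact setIntegral_congr_fun measurableSet_Icc fun x hx => by rw [hR hx]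
  · exact setIntegral_congr_fun measurableSet_Icc fun x hx => by rw [hfhat hx]
end
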